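/- arXiv:math/0609070 — 7 statements merged into one kernel-verified Lean document; each statement's English description precedes it below -/
import Mathlib

section
/- Every generating pair of the symmetric group S_n for n ≤ 5 is symmetric: if S_n = ⟨x, y⟩ with n ≤ 5, then some automorphism of S_n sends x to x⁻¹ and y to y⁻¹. -/
private def li5 (f g : Fin 5 → Fin 5) : Bool :=
  g (f 0) == 0 && g (f 1) == 1 && g (f 2) == 2 && g (f 3) == 3 && g (f 4) == 4

private lemma li5_li {f g : Fin 5 → Fin 5} (h : li5 f g = true) : Function.LeftInverse g f := by
  simp only [li5, Bool.and_eq_true, beq_iff_eq] at h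
  intro i; fin_cases i <;> tauto

private def mk5 (f g : Fin 5 → Fin 5) (h1 : li5 f g = true := by rfl)
    (h2 : li5 g f = true := by rfl) : Equiv.Perm (Fin 5) :=
  ⟨f, g, li5_li h1, li5_li h2⟩

private def q0 : Equiv.Perm (Fin 5) := mk5 ![0, 1, 2, 3, 4] ![0, 1, 2, 3, 4]
private def q1 : Equiv.Perm (Fin 5) := mk5 ![0, 1, 2, 4, 3] ![0, 1, 2, 4, 3]
private def q2 : Equiv.Perm (Fin 5) := mk5 ![0, 1, 3, 2, 4] ![0, 1, 3, 2, 4]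
private def q3 : Equiv.Perm (Fin 5) := mk5 ![0, 1, 3, 4, 2] ![0, 1, 4, 2, 3]
private def q4 : Equiv.Perm (Fin 5) := mk5 ![0, 1, 4, 2, 3] ![0, 1, 3, 4, 2]
private def q5 : Equiv.Perm (Fin 5) := mk5 ![0, 1, 4, 3, 2] ![0, 1, 4, 3, 2]
private def q6 : Equiv.Perm (Fin 5) := mk5 ![0, 2, 1, 3, 4] ![0, 2, 1, 3, 4]
private def q7 : Equiv.Perm (Fin 5) := mk5 ![0, 2, 1, 4, 3] ![0, 2, 1, 4, 3]
private def q8 : Equiv.Perm (Fin 5) := mk5 ![0, 2, 3, 1, 4] ![0, 3, 1, 2, 4]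
private def q9 : Equiv.Perm (Fin 5) := mk5 ![0, 2, 3, 4, 1] ![0, 4, 1, 2, 3]
private def q10 : Equiv.Perm (Fin 5) := mk5 ![0, 2, 4, 1, 3] ![0, 3, 1, 4, 2]
private def q11 : Equiv.Perm (Fin 5) := mk5 ![0, 2, 4, 3, 1] ![0, 4, 1, 3, 2]
private def q12 : Equiv.Perm (Fin 5) := mk5 ![0, 3, 1, 2, 4] ![0, 2, 3, 1, 4]
private def q13 : Equiv.Perm (Fin 5) := mk5 ![0, 3, 1, 4, 2] ![0, 2, 4, 1, 3]
private def q14 : Equiv.Perm (Fin 5) := mk5 ![0, 3, 2, 1, 4] ![0, 3, 2, 1, 4]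
private def q15 : Equiv.Perm (Fin 5) := mk5 ![0, 3, 2, 4, 1] ![0, 4, 2, 1, 3]
private def q16 : Equiv.Perm (Fin 5) := mk5 ![0, 3, 4, 1, 2] ![0, 3, 4, 1, 2]
private def q17 : Equiv.Perm (Fin 5) := mk5 ![0, 3, 4, 2, 1] ![0, 4, 3, 1, 2]
private def q18 : Equiv.Perm (Fin 5) := mk5 ![0, 4, 1, 2, 3] ![0, 2, 3, 4, 1]
private def q19 : Equiv.Perm (Fin 5) := mk5 ![0, 4, 1, 3, 2] ![0, 2, 4, 3, 1]
private def q20 : Equiv.Perm (Fin 5) := mk5 ![0, 4, 2, 1, 3] ![0, 3, 2, 4, 1]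
private def q21 : Equiv.Perm (Fin 5) := mk5 ![0, 4, 2, 3, 1] ![0, 4, 2, 3, 1]
private def q22 : Equiv.Perm (Fin 5) := mk5 ![0, 4, 3, 1, 2] ![0, 3, 4, 2, 1]
private def q23 : Equiv.Perm (Fin 5) := mk5 ![0, 4, 3, 2, 1] ![0, 4, 3, 2, 1]
private def q24 : Equiv.Perm (Fin 5) := mk5 ![1, 0, 2, 3, 4] ![1, 0, 2, 3, 4]
private def q25 : Equiv.Perm (Fin 5) := mk5 ![1, 0, 2, 4, 3] ![1, 0, 2, 4, 3]
private def q26 : Equiv.Perm (Fin 5) := mk5 ![1, 0, 3, 2, 4] ![1, 0, 3, 2, 4]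
private def q27 : Equiv.Perm (Fin 5) := mk5 ![1, 0, 3, 4, 2] ![1, 0, 4, 2, 3]
private def q28 : Equiv.Perm (Fin 5) := mk5 ![1, 0, 4, 2, 3] ![1, 0, 3, 4, 2]
private def q29 : Equiv.Perm (Fin 5) := mk5 ![1, 0, 4, 3, 2] ![1, 0, 4, 3, 2]
private def q30 : Equiv.Perm (Fin 5) := mk5 ![1, 2, 0, 3, 4] ![2, 0, 1, 3, 4]
private def q31 : Equiv.Perm (Fin 5) := mk5 ![1, 2, 0, 4, 3] ![2, 0, 1, 4, 3]
private def q32 : Equiv.Perm (Fin 5) := mk5 ![1, 2, 3, 0, 4] ![3, 0, 1, 2, 4]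
private def q33 : Equiv.Perm (Fin 5) := mk5 ![1, 2, 3, 4, 0] ![4, 0, 1, 2, 3]
private def q34 : Equiv.Perm (Fin 5) := mk5 ![1, 2, 4, 0, 3] ![3, 0, 1, 4, 2]
private def q35 : Equiv.Perm (Fin 5) := mk5 ![1, 2, 4, 3, 0] ![4, 0, 1, 3, 2]
private def q36 : Equiv.Perm (Fin 5) := mk5 ![1, 3, 0, 2, 4] ![2, 0, 3, 1, 4]
private def q37 : Equiv.Perm (Fin 5) := mk5 ![1, 3, 0, 4, 2] ![2, 0, 4, 1, 3]
private def q38 : Equiv.Perm (Fin 5) := mk5 ![1, 3, 2, 0, 4] ![3, 0, 2, 1, 4]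
private def q39 : Equiv.Perm (Fin 5) := mk5 ![1, 3, 2, 4, 0] ![4, 0, 2, 1, 3]
private def q40 : Equiv.Perm (Fin 5) := mk5 ![1, 3, 4, 0, 2] ![3, 0, 4, 1, 2]
private def q41 : Equiv.Perm (Fin 5) := mk5 ![1, 3, 4, 2, 0] ![4, 0, 3, 1, 2]
private def q42 : Equiv.Perm (Fin 5) := mk5 ![1, 4, 0, 2, 3] ![2, 0, 3, 4, 1]
private def q43 : Equiv.Perm (Fin 5) := mk5 ![1, 4, 0, 3, 2] ![2, 0, 4, 3, 1]
private def q44 : Equiv.Perm (Fin 5) := mk5 ![1, 4, 2, 0, 3] ![3, 0, 2, 4, 1]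
private def q45 : Equiv.Perm (Fin 5) := mk5 ![1, 4, 2, 3, 0] ![4, 0, 2, 3, 1]
private def q46 : Equiv.Perm (Fin 5) := mk5 ![1, 4, 3, 0, 2] ![3, 0, 4, 2, 1]
private def q47 : Equiv.Perm (Fin 5) := mk5 ![1, 4, 3, 2, 0] ![4, 0, 3, 2, 1]
private def q48 : Equiv.Perm (Fin 5) := mk5 ![2, 0, 1, 3, 4] ![1, 2, 0, 3, 4]
private def q49 : Equiv.Perm (Fin 5) := mk5 ![2, 0, 1, 4, 3] ![1, 2, 0, 4, 3]
private def q50 : Equiv.Perm (Fin 5) := mk5 ![2, 0, 3, 1, 4] ![1, 3, 0, 2, 4]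
private def q51 : Equiv.Perm (Fin 5) := mk5 ![2, 0, 3, 4, 1] ![1, 4, 0, 2, 3]
private def q52 : Equiv.Perm (Fin 5) := mk5 ![2, 0, 4, 1, 3] ![1, 3, 0, 4, 2]
private def q53 : Equiv.Perm (Fin 5) := mk5 ![2, 0, 4, 3, 1] ![1, 4, 0, 3, 2]
private def q54 : Equiv.Perm (Fin 5) := mk5 ![2, 1, 0, 3, 4] ![2, 1, 0, 3, 4]
private def q55 : Equiv.Perm (Fin 5) := mk5 ![2, 1, 0, 4, 3] ![2, 1, 0, 4, 3]
private def q56 : Equiv.Perm (Fin 5) := mk5 ![2, 1, 3, 0, 4] ![3, 1, 0, 2, 4]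
private def q57 : Equiv.Perm (Fin 5) := mk5 ![2, 1, 3, 4, 0] ![4, 1, 0, 2, 3]
private def q58 : Equiv.Perm (Fin 5) := mk5 ![2, 1, 4, 0, 3] ![3, 1, 0, 4, 2]
private def q59 : Equiv.Perm (Fin 5) := mk5 ![2, 1, 4, 3, 0] ![4, 1, 0, 3, 2]
private def q60 : Equiv.Perm (Fin 5) := mk5 ![2, 3, 0, 1, 4] ![2, 3, 0, 1, 4]
private def q61 : Equiv.Perm (Fin 5) := mk5 ![2, 3, 0, 4, 1] ![2, 4, 0, 1, 3]
private def q62 : Equiv.Perm (Fin 5) := mk5 ![2, 3, 1, 0, 4] ![3, 2, 0, 1, 4]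
private def q63 : Equiv.Perm (Fin 5) := mk5 ![2, 3, 1, 4, 0] ![4, 2, 0, 1, 3]
private def q64 : Equiv.Perm (Fin 5) := mk5 ![2, 3, 4, 0, 1] ![3, 4, 0, 1, 2]
private def q65 : Equiv.Perm (Fin 5) := mk5 ![2, 3, 4, 1, 0] ![4, 3, 0, 1, 2]
private def q66 : Equiv.Perm (Fin 5) := mk5 ![2, 4, 0, 1, 3] ![2, 3, 0, 4, 1]
private def q67 : Equiv.Perm (Fin 5) := mk5 ![2, 4, 0, 3, 1] ![2, 4, 0, 3, 1]
private def q68 : Equiv.Perm (Fin 5) := mk5 ![2, 4, 1, 0, 3] ![3, 2, 0, 4, 1]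
private def q69 : Equiv.Perm (Fin 5) := mk5 ![2, 4, 1, 3, 0] ![4, 2, 0, 3, 1]
private def q70 : Equiv.Perm (Fin 5) := mk5 ![2, 4, 3, 0, 1] ![3, 4, 0, 2, 1]
private def q71 : Equiv.Perm (Fin 5) := mk5 ![2, 4, 3, 1, 0] ![4, 3, 0, 2, 1]
private def q72 : Equiv.Perm (Fin 5) := mk5 ![3, 0, 1, 2, 4] ![1, 2, 3, 0, 4]
private def q73 : Equiv.Perm (Fin 5) := mk5 ![3, 0, 1, 4, 2] ![1, 2, 4, 0, 3]
private def q74 : Equiv.Perm (Fin 5) := mk5 ![3, 0, 2, 1, 4] ![1, 3, 2, 0, 4]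
private def q75 : Equiv.Perm (Fin 5) := mk5 ![3, 0, 2, 4, 1] ![1, 4, 2, 0, 3]
private def q76 : Equiv.Perm (Fin 5) := mk5 ![3, 0, 4, 1, 2] ![1, 3, 4, 0, 2]
private def q77 : Equiv.Perm (Fin 5) := mk5 ![3, 0, 4, 2, 1] ![1, 4, 3, 0, 2]
private def q78 : Equiv.Perm (Fin 5) := mk5 ![3, 1, 0, 2, 4] ![2, 1, 3, 0, 4]
private def q79 : Equiv.Perm (Fin 5) := mk5 ![3, 1, 0, 4, 2] ![2, 1, 4, 0, 3]
private def q80 : Equiv.Perm (Fin 5) := mk5 ![3, 1, 2, 0, 4] ![3, 1, 2, 0, 4]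
private def q81 : Equiv.Perm (Fin 5) := mk5 ![3, 1, 2, 4, 0] ![4, 1, 2, 0, 3]
private def q82 : Equiv.Perm (Fin 5) := mk5 ![3, 1, 4, 0, 2] ![3, 1, 4, 0, 2]
private def q83 : Equiv.Perm (Fin 5) := mk5 ![3, 1, 4, 2, 0] ![4, 1, 3, 0, 2]
private def q84 : Equiv.Perm (Fin 5) := mk5 ![3, 2, 0, 1, 4] ![2, 3, 1, 0, 4]
private def q85 : Equiv.Perm (Fin 5) := mk5 ![3, 2, 0, 4, 1] ![2, 4, 1, 0, 3]
private def q86 : Equiv.Perm (Fin 5) := mk5 ![3, 2, 1, 0, 4] ![3, 2, 1, 0, 4]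
private def q87 : Equiv.Perm (Fin 5) := mk5 ![3, 2, 1, 4, 0] ![4, 2, 1, 0, 3]
private def q88 : Equiv.Perm (Fin 5) := mk5 ![3, 2, 4, 0, 1] ![3, 4, 1, 0, 2]
private def q89 : Equiv.Perm (Fin 5) := mk5 ![3, 2, 4, 1, 0] ![4, 3, 1, 0, 2]
private def q90 : Equiv.Perm (Fin 5) := mk5 ![3, 4, 0, 1, 2] ![2, 3, 4, 0, 1]
private def q91 : Equiv.Perm (Fin 5) := mk5 ![3, 4, 0, 2, 1] ![2, 4, 3, 0, 1]
private def q92 : Equiv.Perm (Fin 5) := mk5 ![3, 4, 1, 0, 2] ![3, 2, 4, 0, 1]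
private def q93 : Equiv.Perm (Fin 5) := mk5 ![3, 4, 1, 2, 0] ![4, 2, 3, 0, 1]
private def q94 : Equiv.Perm (Fin 5) := mk5 ![3, 4, 2, 0, 1] ![3, 4, 2, 0, 1]
private def q95 : Equiv.Perm (Fin 5) := mk5 ![3, 4, 2, 1, 0] ![4, 3, 2, 0, 1]
private def q96 : Equiv.Perm (Fin 5) := mk5 ![4, 0, 1, 2, 3] ![1, 2, 3, 4, 0]
private def q97 : Equiv.Perm (Fin 5) := mk5 ![4, 0, 1, 3, 2] ![1, 2, 4, 3, 0]
private def q98 : Equiv.Perm (Fin 5) := mk5 ![4, 0, 2, 1, 3] ![1, 3, 2, 4, 0]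
private def q99 : Equiv.Perm (Fin 5) := mk5 ![4, 0, 2, 3, 1] ![1, 4, 2, 3, 0]
private def q100 : Equiv.Perm (Fin 5) := mk5 ![4, 0, 3, 1, 2] ![1, 3, 4, 2, 0]
private def q101 : Equiv.Perm (Fin 5) := mk5 ![4, 0, 3, 2, 1] ![1, 4, 3, 2, 0]
private def q102 : Equiv.Perm (Fin 5) := mk5 ![4, 1, 0, 2, 3] ![2, 1, 3, 4, 0]
private def q103 : Equiv.Perm (Fin 5) := mk5 ![4, 1, 0, 3, 2] ![2, 1, 4, 3, 0]
private def q104 : Equiv.Perm (Fin 5) := mk5 ![4, 1, 2, 0, 3] ![3, 1, 2, 4, 0]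
private def q105 : Equiv.Perm (Fin 5) := mk5 ![4, 1, 2, 3, 0] ![4, 1, 2, 3, 0]
private def q106 : Equiv.Perm (Fin 5) := mk5 ![4, 1, 3, 0, 2] ![3, 1, 4, 2, 0]
private def q107 : Equiv.Perm (Fin 5) := mk5 ![4, 1, 3, 2, 0] ![4, 1, 3, 2, 0]
private def q108 : Equiv.Perm (Fin 5) := mk5 ![4, 2, 0, 1, 3] ![2, 3, 1, 4, 0]
private def q109 : Equiv.Perm (Fin 5) := mk5 ![4, 2, 0, 3, 1] ![2, 4, 1, 3, 0]
private def q110 : Equiv.Perm (Fin 5) := mk5 ![4, 2, 1, 0, 3] ![3, 2, 1, 4, 0]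
private def q111 : Equiv.Perm (Fin 5) := mk5 ![4, 2, 1, 3, 0] ![4, 2, 1, 3, 0]
private def q112 : Equiv.Perm (Fin 5) := mk5 ![4, 2, 3, 0, 1] ![3, 4, 1, 2, 0]
private def q113 : Equiv.Perm (Fin 5) := mk5 ![4, 2, 3, 1, 0] ![4, 3, 1, 2, 0]
private def q114 : Equiv.Perm (Fin 5) := mk5 ![4, 3, 0, 1, 2] ![2, 3, 4, 1, 0]
private def q115 : Equiv.Perm (Fin 5) := mk5 ![4, 3, 0, 2, 1] ![2, 4, 3, 1, 0]
private def q116 : Equiv.Perm (Fin 5) := mk5 ![4, 3, 1, 0, 2] ![3, 2, 4, 1, 0]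
private def q117 : Equiv.Perm (Fin 5) := mk5 ![4, 3, 1, 2, 0] ![4, 2, 3, 1, 0]
private def q118 : Equiv.Perm (Fin 5) := mk5 ![4, 3, 2, 0, 1] ![3, 4, 2, 1, 0]
private def q119 : Equiv.Perm (Fin 5) := mk5 ![4, 3, 2, 1, 0] ![4, 3, 2, 1, 0]

private def pe (a b : Equiv.Perm (Fin 5)) : Bool :=
  a 0 == b 0 && a 1 == b 1 && a 2 == b 2 && a 3 == b 3 && a 4 == b 4

/-- `conj5 g x = g * x * g⁻¹` (definitionally). -/
private def conj5 (g x : Equiv.Perm (Fin 5)) : Equiv.Perm (Fin 5) := g.symm.trans (x.trans g)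
/-- `conjI5 g x = g⁻¹ * x * g` (definitionally). -/
private def conjI5 (g x : Equiv.Perm (Fin 5)) : Equiv.Perm (Fin 5) := g.trans (x.trans g.symm)

/-- Each permutation of `Fin 5`, paired with a conjugator into the representative list. -/
private def wit5 : List (Equiv.Perm (Fin 5) × Equiv.Perm (Fin 5)) :=
  [(q0, q0),
   (q1, q64),
   (q2, q60),
   (q3, q90),
   (q4, q91),
   (q5, q61),
   (q6, q48),
   (q7, q96),
   (q8, q72),
   (q9, q96),
   (q10, q97),
   (q11, q73),
   (q12, q74),
   (q13, q100),
   (q14, q50),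
   (q15, q76),
   (q16, q98),
   (q17, q98),
   (q18, q101),
   (q19, q75),
   (q20, q77),
   (q21, q51),
   (q22, q99),
   (q23, q99),
   (q24, q0),
   (q25, q4),
   (q26, q0),
   (q27, q90),
   (q28, q91),
   (q29, q1),
   (q30, q0),
   (q31, q0),
   (q32, q0),
   (q33, q0),
   (q34, q1),
   (q35, q1),
   (q36, q2),
   (q37, q4),
   (q38, q2),
   (q39, q4),
   (q40, q2),
   (q41, q2),
   (q42, q5),
   (q43, q3),
   (q44, q5),
   (q45, q3),
   (q46, q3),
   (q47, q3),
   (q48, q6),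
   (q49, q6),
   (q50, q12),
   (q51, q18),
   (q52, q19),
   (q53, q13),
   (q54, q6),
   (q55, q18),
   (q56, q12),
   (q57, q18),
   (q58, q19),
   (q59, q13),
   (q60, q6),
   (q61, q76),
   (q62, q6),
   (q63, q6),
   (q64, q13),
   (q65, q13),
   (q66, q77),
   (q67, q7),
   (q68, q7),
   (q69, q7),
   (q70, q12),
   (q71, q12),
   (q72, q14),
   (q73, q22),
   (q74, q8),
   (q75, q16),
   (q76, q8),
   (q77, q20),
   (q78, q14),
   (q79, q22),
   (q80, q8),
   (q81, q16),
   (q82, q20),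
   (q83, q20),
   (q84, q8),
   (q85, q16),
   (q86, q8),
   (q87, q16),
   (q88, q73),
   (q89, q8),
   (q90, q10),
   (q91, q14),
   (q92, q75),
   (q93, q14),
   (q94, q10),
   (q95, q10),
   (q96, q23),
   (q97, q15),
   (q98, q17),
   (q99, q9),
   (q100, q21),
   (q101, q9),
   (q102, q23),
   (q103, q15),
   (q104, q17),
   (q105, q9),
   (q106, q21),
   (q107, q21),
   (q108, q17),
   (q109, q9),
   (q110, q17),
   (q111, q9),
   (q112, q9),
   (q113, q72),
   (q114, q15),
   (q115, q11),
   (q116, q15),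
   (q117, q74),
   (q118, q11),
   (q119, q11)]

private def all5 : List (Equiv.Perm (Fin 5)) := wit5.map Prod.fst

/-- Membership test for the order-20 Frobenius subgroup `N(⟨q33⟩)` of `S₅`. -/
private def P5b (x : Equiv.Perm (Fin 5)) : Bool :=
  pe (conj5 x q33) q33 || pe (conj5 x q33) q64 || pe (conj5 x q33) q90 || pe (conj5 x q33) q96

/-- Conjugacy class representatives, each with a list of inverting conjugators (for the
identity, a list sufficient to invert any element). -/
private def data5 : List (Equiv.Perm (Fin 5) × List (Equiv.Perm (Fin 5))) :=
  [(q0, [q0, q7, q16, q2, q21, q23, q1, q5, q6, q14]),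
   (q24, [q0, q1, q2, q3, q4, q5, q24, q25, q26, q27, q28, q29]),
   (q26, [q0, q2, q24, q26, q60, q62, q84, q86]),
   (q30, [q6, q7, q24, q25, q54, q55]),
   (q31, [q6, q7, q24, q25, q54, q55]),
   (q32, [q14, q26, q54, q86]),
   (q33, [q23, q29, q55, q86, q119])]

private def reps5 : List (Equiv.Perm (Fin 5)) := data5.map Prod.fst

private def cos5 : List (Equiv.Perm (Fin 5)) := [q0, q1, q2, q3, q4, q5]

set_option maxRecDepth 100000 in
private lemma conjB : (wit5.all fun p => reps5.any fun r => pe (conj5 p.2 p.1) r) = true := by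
  decide

set_option maxHeartbeats 10000000 in
set_option maxRecDepth 100000 in
private lemma keyB : (data5.all fun p => all5.all fun y =>
    (p.2.any fun g => pe (conj5 g y) y.symm && pe (conj5 g p.1) p.1.symm) ||
    (cos5.any fun g => P5b (conjI5 g p.1) && P5b (conjI5 g y))) = true := by
  decide

set_option maxHeartbeats 10000000 in
set_option maxRecDepth 100000 in
private lemma nodupB : (all5.map fun a => (a 0, a 1, a 2, a 3, a 4)).Nodup := by decide

set_option maxHeartbeats 10000000 in
set_option maxRecDepth 100000 in
private lemma H5mul : (all5.all fun a => !P5b a ||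
    all5.all fun b => !P5b b || P5b (b.trans a)) = true := by decide

set_option maxRecDepth 100000 in
private lemma H5inv : (all5.all fun a => !P5b a || P5b a.symm) = true := by decide

private lemma pe_iff {a b : Equiv.Perm (Fin 5)} : pe a b = true ↔ a = b := by
  constructor
  · intro h
    simp only [pe, Bool.and_eq_true, beq_iff_eq] at h
    obtain ⟨⟨⟨⟨h0, h1⟩, h2⟩, h3⟩, h4⟩ := h
    ext i
    fin_cases i
    · exact congrArg Fin.val h0
    · exact congrArg Fin.val h1
    · exact congrArg Fin.val h2
    · exact congrArg Fin.val h3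
    · exact congrArg Fin.val h4
  · rintro rfl
    simp [pe]


private lemma conj5_eq (g x : Equiv.Perm (Fin 5)) : conj5 g x = g * x * g⁻¹ := rfl
private lemma conjI5_eq (g x : Equiv.Perm (Fin 5)) : conjI5 g x = g⁻¹ * x * g := rfl

private lemma all5_complete : ∀ x : Equiv.Perm (Fin 5), x ∈ all5 := by
  have hnd : all5.Nodup := nodupB.of_map _
  have hcard : all5.toFinset = (Finset.univ : Finset (Equiv.Perm (Fin 5))) := by
    apply Finset.eq_univ_of_card
    rw [List.toFinset_card_of_nodup hnd]
    rw [Fintype.card_perm]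
    rfl
  intro x
  exact List.mem_toFinset.mp (hcard ▸ Finset.mem_univ x)

/-- The Frobenius subgroup of order 20 in `S₅` (normalizer of `⟨c5⟩`). -/
private def H5 : Subgroup (Equiv.Perm (Fin 5)) where
  carrier := {x | P5b x = true}
  one_mem' := by decide
  mul_mem' := by
    intro a b ha hb
    have h := List.all_eq_true.mp H5mul a (all5_complete a)
    rcases Bool.or_eq_true _ _ |>.mp h with h | h
    · simp only [Set.mem_setOf_eq] at ha
      rw [ha] at h; exact absurd h (by decide)
    · have h' := List.all_eq_true.mp h b (all5_complete b)
      rcases Bool.or_eq_true _ _ |>.mp h' with h' | h'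
      · simp only [Set.mem_setOf_eq] at hb
        rw [hb] at h'; exact absurd h' (by decide)
      · exact h'
  inv_mem' := by
    intro a ha
    have h := List.all_eq_true.mp H5inv a (all5_complete a)
    rcases Bool.or_eq_true _ _ |>.mp h with h | h
    · simp only [Set.mem_setOf_eq] at ha
      rw [ha] at h; exact absurd h (by decide)
    · exact h

private lemma mem_H5 {a : Equiv.Perm (Fin 5)} : a ∈ H5 ↔ P5b a = true := Iff.rfl

/-- The core dichotomy for representatives. -/
private lemma key5aux : ∀ r ∈ reps5, ∀ y : Equiv.Perm (Fin 5),
    (∃ g : Equiv.Perm (Fin 5), g * r * g⁻¹ = r⁻¹ ∧ g * y * g⁻¹ = y⁻¹) ∨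
    (∃ g : Equiv.Perm (Fin 5), P5b (g⁻¹ * r * g) = true ∧ P5b (g⁻¹ * y * g) = true) := by
  intro r hr y
  obtain ⟨q, hq, rfl⟩ := List.mem_map.mp hr
  have h := List.all_eq_true.mp (List.all_eq_true.mp keyB q hq) y (all5_complete y)
  rcases Bool.or_eq_true _ _ |>.mp h with h | h
  · obtain ⟨g, _, hg⟩ := List.any_eq_true.mp h
    obtain ⟨h1, h2⟩ := Bool.and_eq_true _ _ |>.mp hg
    exact Or.inl ⟨g, by rw [← conj5_eq]; exact pe_iff.mp h2, by rw [← conj5_eq]; exact pe_iff.mp h1⟩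
  · obtain ⟨g, _, hg⟩ := List.any_eq_true.mp h
    obtain ⟨h1, h2⟩ := Bool.and_eq_true _ _ |>.mp hg
    exact Or.inr ⟨g, by rw [← conjI5_eq]; exact h1, by rw [← conjI5_eq]; exact h2⟩

/-- Core dichotomy in `S₅`: a pair is either simultaneously inverted by a conjugation, or lies
in a common conjugate of the Frobenius subgroup `H5`. -/
private lemma key5 (x y : Equiv.Perm (Fin 5)) :
    (∃ g : Equiv.Perm (Fin 5), g * x * g⁻¹ = x⁻¹ ∧ g * y * g⁻¹ = y⁻¹) ∨
    (∃ g : Equiv.Perm (Fin 5), P5b (g⁻¹ * x * g) = true ∧ P5b (g⁻¹ * y * g) = true) := by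
  obtain ⟨p, hp, hfst⟩ := List.mem_map.mp (all5_complete x)
  obtain ⟨r, hr, hper⟩ := List.any_eq_true.mp (List.all_eq_true.mp conjB p hp)
  set σ := p.2 with hσdef
  have hconj : σ * x * σ⁻¹ = r := by
    rw [← conj5_eq, ← hfst]
    exact pe_iff.mp hper
  rcases key5aux r hr (σ * y * σ⁻¹) with ⟨g, h1, h2⟩ | ⟨g, h1, h2⟩
  · refine Or.inl ⟨σ⁻¹ * g * σ, ?_, ?_⟩
    · calc σ⁻¹ * g * σ * x * (σ⁻¹ * g * σ)⁻¹
          = σ⁻¹ * (g * (σ * x * σ⁻¹) * g⁻¹) * σ := by group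
        _ = σ⁻¹ * r⁻¹ * σ := by rw [hconj, h1]
        _ = x⁻¹ := by rw [← hconj]; group
    · calc σ⁻¹ * g * σ * y * (σ⁻¹ * g * σ)⁻¹
          = σ⁻¹ * (g * (σ * y * σ⁻¹) * g⁻¹) * σ := by group
        _ = σ⁻¹ * (σ * y * σ⁻¹)⁻¹ * σ := by rw [h2]
        _ = y⁻¹ := by group
  · refine Or.inr ⟨σ⁻¹ * g, ?_, ?_⟩
    · have e : (σ⁻¹ * g)⁻¹ * x * (σ⁻¹ * g) = g⁻¹ * (σ * x * σ⁻¹) * g := by group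
      rw [e, hconj]; exact h1
    · have e : (σ⁻¹ * g)⁻¹ * y * (σ⁻¹ * g) = g⁻¹ * (σ * y * σ⁻¹) * g := by group
      rw [e]; exact h2

private lemma conj_sol {G : Type*} [Group G] (x y g : G) (h1 : g * x * g⁻¹ = x⁻¹)
    (h2 : g * y * g⁻¹ = y⁻¹) : ∃ φ : G ≃* G, φ x = x⁻¹ ∧ φ y = y⁻¹ :=
  ⟨MulAut.conj g, by simpa using h1, by simpa using h2⟩

set_option maxRecDepth 10000 in
private lemma easy1 : ∀ x y : Equiv.Perm (Fin 1), ∃ g : Equiv.Perm (Fin 1),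
    g * x * g⁻¹ = x⁻¹ ∧ g * y * g⁻¹ = y⁻¹ := by decide

set_option maxRecDepth 10000 in
private lemma easy2 : ∀ x y : Equiv.Perm (Fin 2), ∃ g : Equiv.Perm (Fin 2),
    g * x * g⁻¹ = x⁻¹ ∧ g * y * g⁻¹ = y⁻¹ := by decide

set_option maxHeartbeats 4000000 in
set_option maxRecDepth 10000 in
private lemma easy3 : ∀ x y : Equiv.Perm (Fin 3), ∃ g : Equiv.Perm (Fin 3),
    g * x * g⁻¹ = x⁻¹ ∧ g * y * g⁻¹ = y⁻¹ := by decide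

set_option maxHeartbeats 40000000 in
set_option maxRecDepth 10000 in
private lemma easy4 : ∀ x y : Equiv.Perm (Fin 4), ∃ g : Equiv.Perm (Fin 4),
    g * x * g⁻¹ = x⁻¹ ∧ g * y * g⁻¹ = y⁻¹ := by decide

/-- Every generating pair of the symmetric group `S_n` for `n ≤ 5` is symmetric: some
automorphism of `S_n` inverts both generators. -/
theorem stmt_4 (n : ℕ) (hn : n ≤ 5) (x y : Equiv.Perm (Fin n))
    (hgen : Subgroup.closure ({x, y} : Set (Equiv.Perm (Fin n))) = ⊤) :
    ∃ φ : Equiv.Perm (Fin n) ≃* Equiv.Perm (Fin n), φ x = x⁻¹ ∧ φ y = y⁻¹ := by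
  interval_cases n
  · exact ⟨MulEquiv.refl _, Subsingleton.elim _ _, Subsingleton.elim _ _⟩
  · obtain ⟨g, h1, h2⟩ := easy1 x y; exact conj_sol x y g h1 h2
  · obtain ⟨g, h1, h2⟩ := easy2 x y; exact conj_sol x y g h1 h2
  · obtain ⟨g, h1, h2⟩ := easy3 x y; exact conj_sol x y g h1 h2
  · obtain ⟨g, h1, h2⟩ := easy4 x y; exact conj_sol x y g h1 h2
  · rcases key5 x y with ⟨g, h1, h2⟩ | ⟨g, h1, h2⟩
    · exact conj_sol x y g h1 h2
    · -- the pair lies in a conjugate of `H5`, contradicting generation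
      exfalso
      set f : Equiv.Perm (Fin 5) →* Equiv.Perm (Fin 5) :=
        (MulAut.conj g⁻¹).toMonoidHom with hf
      have hfapp : ∀ w, f w = g⁻¹ * w * g := by intro w; simp [hf]
      have hle : Subgroup.closure ({x, y} : Set (Equiv.Perm (Fin 5))) ≤ H5.comap f := by
        rw [Subgroup.closure_le]
        rintro z (rfl | rfl)
      -- `z = x`
        · rw [SetLike.mem_coe, Subgroup.mem_comap, hfapp, mem_H5]; exact h1
      -- `z = y`
        · rw [SetLike.mem_coe, Subgroup.mem_comap, hfapp, mem_H5]; exact h2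
      rw [hgen] at hle
      have hz : (g * Equiv.swap (0 : Fin 5) 1 * g⁻¹) ∈ H5.comap f :=
        hle (Subgroup.mem_top _)
      rw [Subgroup.mem_comap, hfapp] at hz
      have e : g⁻¹ * (g * Equiv.swap (0 : Fin 5) 1 * g⁻¹) * g = Equiv.swap (0 : Fin 5) 1 := by
        group
      rw [e, mem_H5] at hz
      exact absurd hz (by decide)
end

section
/- Let G = ⟨a, b | aⁿ = 1, bᵐ = aˢ, b a b⁻¹ = aʳ⟩ be a metacyclic group of order mn with rs ≡ s (mod n) and rᵐ ≡ 1 (mod n), m > 2. The smallest normal subgroup N of G such that the assignment a ↦ a⁻¹, b ↦ b⁻¹ induces an automorphism of G/N is N = ⟨a^{r²−1}⟩, which has order n / gcd(n, r² − 1). -/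
private lemma conj_pow_lemma {G : Type*} [Group G] {t a : G} {u : ℕ}
    (h : t * a * t⁻¹ = a ^ u) : ∀ k : ℕ, t ^ k * a * (t ^ k)⁻¹ = a ^ u ^ k := by
  intro k
  induction k with
  | zero => simp
  | succ k ih =>
    have e : t ^ (k+1) * a * (t ^ (k+1))⁻¹ = t * (t ^ k * a * (t ^ k)⁻¹) * t⁻¹ := by group
    rw [e, ih, ← conj_pow, h, ← pow_mul]
    congr 1
    rw [pow_succ, mul_comm]

private lemma comm_lemma {G : Type*} [Group G] {t c : G} {u : ℕ}
    (h : t⁻¹ * c * t = c ^ u) (j k : ℕ) :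
    c ^ j * t ^ k = t ^ k * c ^ (j * u ^ k) := by
  have h1 : t⁻¹ * c * (t⁻¹)⁻¹ = c ^ u := by rwa [inv_inv]
  have h2 := conj_pow_lemma h1 k
  simp only [inv_inv, inv_pow] at h2
  have h3 : (t ^ k)⁻¹ * c ^ j * ((t ^ k)⁻¹)⁻¹ = ((t ^ k)⁻¹ * c * ((t ^ k)⁻¹)⁻¹) ^ j :=
    (conj_pow).symm
  rw [inv_inv] at h3
  calc c ^ j * t ^ k = t ^ k * ((t ^ k)⁻¹ * c ^ j * t ^ k) := by group
    _ = t ^ k * ((t ^ k)⁻¹ * c * t ^ k) ^ j := by rw [h3]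
    _ = t ^ k * (c ^ u ^ k) ^ j := by rw [h2]
    _ = t ^ k * c ^ (j * u ^ k) := by rw [← pow_mul, mul_comm]

private lemma prod_form {G : Type*} [Group G] {a b : G} {v : ℕ}
    (h : ∀ j k : ℕ, a ^ j * b ^ k = b ^ k * a ^ (j * v ^ k)) (i1 j1 i2 j2 : ℕ) :
    (b ^ i1 * a ^ j1) * (b ^ i2 * a ^ j2) = b ^ (i1 + i2) * a ^ (j1 * v ^ i2 + j2) := by
  calc (b ^ i1 * a ^ j1) * (b ^ i2 * a ^ j2)
      = b ^ i1 * (a ^ j1 * b ^ i2) * a ^ j2 := by group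
    _ = b ^ i1 * (b ^ i2 * a ^ (j1 * v ^ i2)) * a ^ j2 := by rw [h]
    _ = b ^ (i1 + i2) * a ^ (j1 * v ^ i2 + j2) := by rw [pow_add, pow_add]; group

private lemma nat_aux (k w : ℕ) (h : 1 ≤ w) : k + k * (w - 1) = w * k := by
  cases w with
  | zero => omega
  | succ v => simp only [Nat.succ_sub_one]; ring

/-- `N` is a normal subgroup of `G` such that the assignment `a ↦ a⁻¹`, `b ↦ b⁻¹`
induces an automorphism of `G/N`. -/
def InducesInvAut {G : Type*} [Group G] (a b : G) (N : Subgroup G) [N.Normal] : Prop :=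
  ∃ φ : (G ⧸ N) ≃* (G ⧸ N),
    φ ((a : G ⧸ N)) = (a : G ⧸ N)⁻¹ ∧ φ ((b : G ⧸ N)) = (b : G ⧸ N)⁻¹

/-- For the metacyclic group `G = ⟨a, b | aⁿ = 1, bᵐ = aˢ, b a b⁻¹ = aʳ⟩` of order `mn`
with `rs ≡ s (mod n)`, `rᵐ ≡ 1 (mod n)` and `m > 2`, the smallest normal subgroup `N`
of `G` such that `a ↦ a⁻¹`, `b ↦ b⁻¹` induces an automorphism of `G/N` is
`N = ⟨a^(r²−1)⟩`, of order `n / gcd(n, r² − 1)`. -/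
theorem stmt_5 {G : Type*} [Group G] (a b : G) (m n s r : ℕ)
    (hm : 2 < m) (hn : 0 < n) (hr : 0 < r)
    (hgen : Subgroup.closure ({a, b} : Set G) = ⊤)
    (ha : a ^ n = 1) (horda : orderOf a = n)
    (hb : b ^ m = a ^ s) (hconj : b * a * b⁻¹ = a ^ r)
    (hcard : Nat.card G = m * n)
    (hrs : r * s ≡ s [MOD n]) (hrm : r ^ m ≡ 1 [MOD n]) :
    IsLeast {N : Subgroup G | ∃ hN : N.Normal, @InducesInvAut G _ a b N hN}
        (Subgroup.closure {a ^ (r ^ 2 - 1)}) ∧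
      Nat.card (Subgroup.closure {a ^ (r ^ 2 - 1)} : Subgroup G) =
        n / Nat.gcd n (r ^ 2 - 1) := by
  classical
  have hr2 : 1 ≤ r ^ 2 := Nat.one_le_pow _ _ hr
  have hGfin : Finite G := Nat.finite_of_card_ne_zero (by rw [hcard]; positivity)
  set x := a ^ (r ^ 2 - 1) with hxdef
  set g := Nat.gcd n (r ^ 2 - 1) with hgdef
  -- basic conjugation facts
  have hconjk : ∀ k : ℕ, b ^ k * a * (b ^ k)⁻¹ = a ^ r ^ k := conj_pow_lemma hconj
  have hbm_comm : b ^ m * a * (b ^ m)⁻¹ = a := by rw [hb]; group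
  have hbinv : b⁻¹ * a * b = a ^ r ^ (m - 1) := by
    calc b⁻¹ * a * b = b⁻¹ * (b ^ m * a * (b ^ m)⁻¹) * b := by rw [hbm_comm]
      _ = b ^ (m - 1) * a * (b ^ (m - 1))⁻¹ := by
          conv_lhs => rw [show m = (m - 1) + 1 by omega, pow_succ]
          group
      _ = a ^ r ^ (m - 1) := hconjk (m - 1)
  have hcomm : ∀ j k : ℕ, a ^ j * b ^ k = b ^ k * a ^ (j * (r ^ (m - 1)) ^ k) :=
    fun j k => comm_lemma hbinv j k
  have hbmn : b ^ (m * n) = 1 := by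
    rw [pow_mul, hb, ← pow_mul, mul_comm s n, pow_mul, ha, one_pow]
  -- normal form
  have hSurj : ∀ t : G, ∃ i j : ℕ, t = b ^ i * a ^ j := by
    intro t
    have ht : t ∈ Subgroup.closure ({a, b} : Set G) := by rw [hgen]; trivial
    induction ht using Subgroup.closure_induction with
    | mem y hy =>
      rw [Set.mem_insert_iff, Set.mem_singleton_iff] at hy
      rcases hy with rfl | rfl
      · exact ⟨0, 1, by simp⟩
      · exact ⟨1, 0, by simp⟩
    | one => exact ⟨0, 0, by simp⟩
    | mul y z _ _ hy hz =>
      obtain ⟨i1, j1, rfl⟩ := hy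
      obtain ⟨i2, j2, rfl⟩ := hz
      exact ⟨i1 + i2, j1 * (r ^ (m - 1)) ^ i2 + j2, prod_form hcomm i1 j1 i2 j2⟩
    | inv y _ hy =>
      obtain ⟨i, j, rfl⟩ := hy
      refine ⟨i * (m * n - 1), (j * (n - 1)) * (r ^ (m - 1)) ^ (i * (m * n - 1)), ?_⟩
      have hainv : (a ^ j)⁻¹ = a ^ (j * (n - 1)) := by
        rw [inv_eq_iff_mul_eq_one, ← pow_add, nat_aux j n hn, pow_mul, ha, one_pow]
      have hbinv' : (b ^ i)⁻¹ = b ^ (i * (m * n - 1)) := by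
        rw [inv_eq_iff_mul_eq_one, ← pow_add, nat_aux i (m * n) (Nat.mul_pos (by omega) hn),
          pow_mul, hbmn, one_pow]
      rw [mul_inv_rev, hainv, hbinv', hcomm]
  -- normality of cyclic subgroups generated by powers of a
  have hconjmem : ∀ (k : ℕ) (t : G), t * a ^ k * t⁻¹ ∈ Subgroup.zpowers (a ^ k) := by
    intro k t
    obtain ⟨i, j, rfl⟩ := hSurj t
    have e1 : (b ^ i * a ^ j) * a ^ k * (b ^ i * a ^ j)⁻¹ = b ^ i * a ^ k * (b ^ i)⁻¹ := by
      group
    have e2 : b ^ i * a ^ k * (b ^ i)⁻¹ = (b ^ i * a * (b ^ i)⁻¹) ^ k := (conj_pow).symm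
    rw [e1, e2, hconjk i, ← pow_mul, mul_comm, pow_mul]
    exact pow_mem (Subgroup.mem_zpowers _) _
  have hNnorm : ∀ k : ℕ, (Subgroup.zpowers (a ^ k)).Normal := by
    intro k
    constructor
    intro y hy t
    obtain ⟨z, hz⟩ := hy
    rw [← hz]
    show t * (a ^ k) ^ z * t⁻¹ ∈ _
    rw [show t * (a ^ k) ^ z * t⁻¹ = (t * a ^ k * t⁻¹) ^ z from (conj_zpow).symm]
    exact Subgroup.zpow_mem _ (hconjmem k t) z
  have hxcl : Subgroup.closure {x} = Subgroup.zpowers x := (Subgroup.zpowers_eq_closure x).symm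
  haveI hN0norm : (Subgroup.closure {x}).Normal := by rw [hxcl]; exact hNnorm _
  haveI hzanorm : (Subgroup.zpowers a).Normal := by
    have := hNnorm 1; rwa [pow_one] at this
  -- the quotient by ⟨a⟩ and the order of b in it
  have hKa : Nat.card (Subgroup.zpowers a) = n := by rw [Nat.card_zpowers, horda]
  have hQcard : Nat.card (G ⧸ Subgroup.zpowers a) = m := by
    have h := Subgroup.card_eq_card_quotient_mul_card_subgroup (Subgroup.zpowers a)
    rw [hKa, hcard] at h
    exact (Nat.eq_of_mul_eq_mul_right hn h.symm)
  have hQgen : ∀ q : G ⧸ Subgroup.zpowers a, ∃ i : ℕ, q = ((b : G ⧸ Subgroup.zpowers a)) ^ i := by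
    intro q
    obtain ⟨t, rfl⟩ := QuotientGroup.mk_surjective q
    obtain ⟨i, j, rfl⟩ := hSurj t
    refine ⟨i, ?_⟩
    have h1 : ((a ^ j : G) : G ⧸ Subgroup.zpowers a) = 1 :=
      (QuotientGroup.eq_one_iff _).mpr (pow_mem (Subgroup.mem_zpowers a) j)
    rw [QuotientGroup.mk_mul, h1, mul_one, QuotientGroup.mk_pow]
  have hordbQ : orderOf ((b : G ⧸ Subgroup.zpowers a)) = m := by
    have htop : Subgroup.zpowers ((b : G ⧸ Subgroup.zpowers a)) = ⊤ := by
      rw [Subgroup.eq_top_iff']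
      intro q
      obtain ⟨i, rfl⟩ := hQgen q
      exact pow_mem (Subgroup.mem_zpowers _) i
    have h := Nat.card_zpowers ((b : G ⧸ Subgroup.zpowers a))
    rw [← h, htop, ← hQcard]
    exact Nat.card_congr Subgroup.topEquiv.toEquiv
  -- work in the quotient H = G / <x>
  set A : G ⧸ Subgroup.closure {x} := ((a : G ⧸ Subgroup.closure {x}))⁻¹ with hA
  set B : G ⧸ Subgroup.closure {x} := ((b : G ⧸ Subgroup.closure {x}))⁻¹ with hB
  have hxH : ((x : G) : G ⧸ Subgroup.closure {x}) = 1 :=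
    (QuotientGroup.eq_one_iff x).mpr (Subgroup.subset_closure rfl)
  have haH : ((a : G ⧸ Subgroup.closure {x})) ^ (r ^ 2 - 1) = 1 := by
    rw [← QuotientGroup.mk_pow]; exact hxH
  have hAr2 : A ^ (r ^ 2 - 1) = 1 := by rw [hA, inv_pow, haH, inv_one]
  have hAn : A ^ n = 1 := by
    rw [hA, inv_pow, ← QuotientGroup.mk_pow, ha, QuotientGroup.mk_one, inv_one]
  have hordA : orderOf A ∣ g :=
    Nat.dvd_gcd (orderOf_dvd_of_pow_eq_one hAn) (orderOf_dvd_of_pow_eq_one hAr2)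
  haveI : Finite (G ⧸ Subgroup.closure {x}) := Quotient.finite _
  have hApow : ∀ z w : ℕ, z ≡ w [MOD g] → A ^ z = A ^ w := fun z w h =>
    pow_eq_pow_iff_modEq.mpr (Nat.ModEq.of_dvd hordA h)
  have hcH : (b : G ⧸ Subgroup.closure {x}) * (a : G ⧸ Subgroup.closure {x}) *
      ((b : G ⧸ Subgroup.closure {x}))⁻¹ = ((a : G ⧸ Subgroup.closure {x})) ^ r := by
    have h := congrArg (QuotientGroup.mk' (Subgroup.closure {x})) hconj
    simpa only [map_mul, map_inv, map_pow, QuotientGroup.mk'_apply] using h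
  have hbH : ((b : G ⧸ Subgroup.closure {x})) ^ m = ((a : G ⧸ Subgroup.closure {x})) ^ s := by
    have h := congrArg (QuotientGroup.mk' (Subgroup.closure {x})) hb
    simpa only [map_pow, QuotientGroup.mk'_apply] using h
  have hBAB : B⁻¹ * A * B = A ^ r := by
    rw [hA, hB]
    calc ((b : G ⧸ Subgroup.closure {x}))⁻¹⁻¹ * ((a : G ⧸ Subgroup.closure {x}))⁻¹ *
        ((b : G ⧸ Subgroup.closure {x}))⁻¹
        = ((b : G ⧸ Subgroup.closure {x}) * (a : G ⧸ Subgroup.closure {x}) *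
          ((b : G ⧸ Subgroup.closure {x}))⁻¹)⁻¹ := by group
      _ = (((a : G ⧸ Subgroup.closure {x})) ^ r)⁻¹ := by rw [hcH]
      _ = (((a : G ⧸ Subgroup.closure {x}))⁻¹) ^ r := by rw [inv_pow]
  have hBm : B ^ m = A ^ s := by rw [hB, hA, inv_pow, hbH, inv_pow]
  have hABk : ∀ j k : ℕ, A ^ j * B ^ k = B ^ k * A ^ (j * r ^ k) := fun j k =>
    comm_lemma hBAB j k
  -- key exponent congruence
  have hg1 : g ∣ r ^ 2 - 1 := Nat.gcd_dvd_right n _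
  have hgn : g ∣ n := Nat.gcd_dvd_left n _
  have h21 : (1 : ℕ) ≡ r ^ 2 [MOD g] := (Nat.modEq_iff_dvd' hr2).mpr hg1
  have hmg : r ^ m ≡ 1 [MOD g] := Nat.ModEq.of_dvd hgn hrm
  have hcop : Nat.Coprime (r ^ 2) (r ^ 2 - 1) := by
    have h0 : (r ^ 2 - 1) + 1 = r ^ 2 := by omega
    have h1 : Nat.Coprime (r ^ 2 - 1) ((r ^ 2 - 1) + 1) := by
      simp [Nat.Coprime, Nat.gcd_comm, Nat.succ_sub_one]
    rw [h0] at h1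
    exact h1.symm
  have hcoprg : Nat.Coprime r g :=
    (Nat.coprime_pow_left_iff two_pos r g).mp (hcop.coprime_dvd_right hg1)
  have hkey : ∀ k : ℕ, (r ^ (m - 1)) ^ k ≡ r ^ k [MOD g] := by
    intro k
    have e1 : r ^ k * (r ^ (m - 1)) ^ k = (r ^ m) ^ k := by
      rw [← mul_pow]
      congr 2
      conv_rhs => rw [show m = 1 + (m - 1) by omega]
      rw [pow_add, pow_one]
    have e2 : r ^ k * r ^ k = (r ^ 2) ^ k := by rw [← mul_pow, ← pow_two]
    have u1 : (r ^ m) ^ k ≡ 1 [MOD g] := by simpa using hmg.pow k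
    have u2 : (1 : ℕ) ≡ (r ^ 2) ^ k [MOD g] := by simpa using h21.pow k
    have hmod : r ^ k * (r ^ (m - 1)) ^ k ≡ r ^ k * r ^ k [MOD g] := by
      rw [e1, e2]; exact u1.trans u2
    exact Nat.ModEq.cancel_left_of_coprime ((hcoprg.pow_left k).symm) hmod
  -- well-definedness
  have hW : ∀ i j i' j' : ℕ, i' ≤ i → b ^ i * a ^ j = b ^ i' * a ^ j' →
      B ^ i * A ^ j = B ^ i' * A ^ j' := by
    intro i j i' j' hle heq
    have h1 : b ^ (i - i') * a ^ j = a ^ j' := by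
      have h0 : b ^ i' * (b ^ (i - i') * a ^ j) = b ^ i' * a ^ j' := by
        rw [← mul_assoc, ← pow_add, Nat.add_sub_cancel' hle, heq]
      exact mul_left_cancel h0
    have hbeq : b ^ (i - i') = a ^ j' * (a ^ j)⁻¹ := by rw [← h1]; group
    have h2 : ((b : G ⧸ Subgroup.zpowers a)) ^ (i - i') = 1 := by
      rw [← QuotientGroup.mk_pow]
      exact (QuotientGroup.eq_one_iff _).mpr (by
        rw [hbeq]
        exact mul_mem (pow_mem (Subgroup.mem_zpowers a) j')
          (inv_mem (pow_mem (Subgroup.mem_zpowers a) j)))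
    have h3 : m ∣ i - i' := by rw [← hordbQ]; exact orderOf_dvd_of_pow_eq_one h2
    obtain ⟨t, ht⟩ := h3
    have h4 : b ^ (i - i') = a ^ (s * t) := by rw [ht, pow_mul, hb, ← pow_mul]
    have h5 : a ^ (s * t + j) = a ^ j' := by rw [pow_add, ← h4, h1]
    have h6 : s * t + j ≡ j' [MOD n] := by rw [← horda]; exact pow_eq_pow_iff_modEq.mp h5
    have h7 : A ^ (s * t + j) = A ^ j' :=
      pow_eq_pow_iff_modEq.mpr (Nat.ModEq.of_dvd (orderOf_dvd_of_pow_eq_one hAn) h6)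
    have h8 : B ^ (i - i') = A ^ (s * t) := by rw [ht, pow_mul, hBm, ← pow_mul]
    calc B ^ i * A ^ j = B ^ i' * (B ^ (i - i') * A ^ j) := by
          rw [← mul_assoc, ← pow_add, Nat.add_sub_cancel' hle]
      _ = B ^ i' * (A ^ (s * t) * A ^ j) := by rw [h8]
      _ = B ^ i' * A ^ (s * t + j) := by rw [← pow_add]
      _ = B ^ i' * A ^ j' := by rw [h7]
  have hW' : ∀ i j i' j' : ℕ, b ^ i * a ^ j = b ^ i' * a ^ j' →
      B ^ i * A ^ j = B ^ i' * A ^ j' := by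
    intro i j i' j' heq
    rcases le_total i' i with h | h
    · exact hW i j i' j' h heq
    · exact (hW i' j' i j h heq.symm).symm
  choose I J hIJ using fun t => hSurj t
  set f : G → (G ⧸ Subgroup.closure {x}) := fun t => B ^ I t * A ^ J t with hfdef
  have hf : ∀ (t : G) (i j : ℕ), t = b ^ i * a ^ j → f t = B ^ i * A ^ j := by
    intro t i j h
    exact hW' (I t) (J t) i j ((hIJ t).symm.trans h)
  have hfmul : ∀ t u : G, f (t * u) = f t * f u := by
    intro t u
    have key : t * u = b ^ (I t + I u) * a ^ (J t * (r ^ (m - 1)) ^ (I u) + J u) := by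
      calc t * u = (b ^ I t * a ^ J t) * (b ^ I u * a ^ J u) := by rw [← hIJ t, ← hIJ u]
        _ = _ := prod_form hcomm _ _ _ _
    rw [hf _ _ _ key, hf t _ _ (hIJ t), hf u _ _ (hIJ u)]
    rw [prod_form hABk (I t) (J t) (I u) (J u)]
    congr 1
    exact hApow _ _ (Nat.ModEq.add_right _ (Nat.ModEq.mul_left _ (hkey (I u))))
  -- the homomorphism and the induced automorphism
  set ψ : G →* G ⧸ Subgroup.closure {x} := MonoidHom.mk' f hfmul with hψdef
  have hψa : ψ a = A := by
    show f a = A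
    rw [hf a 0 1 (by simp), pow_zero, pow_one, one_mul]
  have hψb : ψ b = B := by
    show f b = B
    rw [hf b 1 0 (by simp), pow_zero, pow_one, mul_one]
  have hψx : ∀ y ∈ Subgroup.closure {x}, ψ y = 1 := by
    have hsub : Subgroup.closure {x} ≤ ψ.ker := (Subgroup.closure_le _).mpr (by
      intro z hz
      rw [Set.mem_singleton_iff] at hz
      subst hz
      show x ∈ ψ.ker
      rw [MonoidHom.mem_ker]
      show f x = 1
      rw [hf x 0 (r ^ 2 - 1) (by rw [hxdef, pow_zero, one_mul]), pow_zero, one_mul, hAr2])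
    intro y hy
    exact MonoidHom.mem_ker.mp (hsub hy)
  set φ0 : (G ⧸ Subgroup.closure {x}) →* (G ⧸ Subgroup.closure {x}) :=
    QuotientGroup.lift (Subgroup.closure {x}) ψ hψx with hφ0def
  have hφ0a : φ0 ((a : G ⧸ Subgroup.closure {x})) = A := hψa
  have hφ0b : φ0 ((b : G ⧸ Subgroup.closure {x})) = B := hψb
  have hHgen : ∀ h : G ⧸ Subgroup.closure {x}, ∃ i j : ℕ,
      h = ((b : G ⧸ Subgroup.closure {x})) ^ i * ((a : G ⧸ Subgroup.closure {x})) ^ j := by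
    intro h
    obtain ⟨t, rfl⟩ := QuotientGroup.mk_surjective h
    obtain ⟨i, j, rfl⟩ := hSurj t
    exact ⟨i, j, by rw [QuotientGroup.mk_mul, QuotientGroup.mk_pow, QuotientGroup.mk_pow]⟩
  have hsurj : Function.Surjective φ0 := by
    intro h
    obtain ⟨i, j, rfl⟩ := hHgen h
    refine ⟨B ^ i * A ^ j, ?_⟩
    rw [map_mul, map_pow, map_pow, hB, hA, map_inv, map_inv, hφ0a, hφ0b, hA, hB]
    group
  have hbij : Function.Bijective φ0 := ⟨Finite.injective_iff_surjective.mpr hsurj, hsurj⟩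
  set φ : (G ⧸ Subgroup.closure {x}) ≃* (G ⧸ Subgroup.closure {x}) :=
    MulEquiv.ofBijective φ0 hbij with hφdef
  have hmem : ∃ hN : (Subgroup.closure {x}).Normal,
      @InducesInvAut G _ a b (Subgroup.closure {x}) hN := by
    refine ⟨hN0norm, φ, ?_, ?_⟩
    · show φ0 ((a : G ⧸ Subgroup.closure {x})) = ((a : G ⧸ Subgroup.closure {x}))⁻¹
      rw [hφ0a, hA]
    · show φ0 ((b : G ⧸ Subgroup.closure {x})) = ((b : G ⧸ Subgroup.closure {x}))⁻¹
      rw [hφ0b, hB]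
  -- lower bound
  have hlb : ∀ N ∈ {N : Subgroup G | ∃ hN : N.Normal, @InducesInvAut G _ a b N hN},
      Subgroup.closure {x} ≤ N := by
    rintro N ⟨hNn, φN, hφNa, hφNb⟩
    haveI := hNn
    have hcN : (b : G ⧸ N) * (a : G ⧸ N) * ((b : G ⧸ N))⁻¹ = ((a : G ⧸ N)) ^ r := by
      have h := congrArg (QuotientGroup.mk' N) hconj
      simpa only [map_mul, map_inv, map_pow, QuotientGroup.mk'_apply] using h
    have h1 := congrArg φN hcN
    rw [map_mul, map_mul, map_inv, map_pow, hφNa, hφNb] at h1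
    have h1' : ((b : G ⧸ N))⁻¹ * ((a : G ⧸ N))⁻¹ * (b : G ⧸ N) = (((a : G ⧸ N)) ^ r)⁻¹ := by
      simpa only [inv_inv, inv_pow] using h1
    have h2 : ((b : G ⧸ N))⁻¹ * (a : G ⧸ N) * (b : G ⧸ N) = ((a : G ⧸ N)) ^ r := by
      have h := congrArg (fun z => z⁻¹) h1'
      simpa [mul_inv_rev, mul_assoc] using h
    have h2' : (b : G ⧸ N) * ((a : G ⧸ N)) ^ r * ((b : G ⧸ N))⁻¹ = (a : G ⧸ N) := by
      calc (b : G ⧸ N) * ((a : G ⧸ N)) ^ r * ((b : G ⧸ N))⁻¹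
          = (b : G ⧸ N) * (((b : G ⧸ N))⁻¹ * (a : G ⧸ N) * (b : G ⧸ N)) * ((b : G ⧸ N))⁻¹ := by
            rw [h2]
        _ = (a : G ⧸ N) := by group
    have h3 : ((a : G ⧸ N)) ^ (r ^ 2) = (a : G ⧸ N) := by
      calc ((a : G ⧸ N)) ^ (r ^ 2) = (((a : G ⧸ N)) ^ r) ^ r := by rw [pow_two, pow_mul]
        _ = ((b : G ⧸ N) * (a : G ⧸ N) * ((b : G ⧸ N))⁻¹) ^ r := by rw [hcN]
        _ = (b : G ⧸ N) * ((a : G ⧸ N)) ^ r * ((b : G ⧸ N))⁻¹ := conj_pow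
        _ = (a : G ⧸ N) := h2'
    have h4 : ((a : G ⧸ N)) ^ (r ^ 2 - 1) = 1 := by
      have h5 : ((a : G ⧸ N)) ^ (r ^ 2 - 1) * (a : G ⧸ N) = 1 * (a : G ⧸ N) := by
        rw [← pow_succ, show (r ^ 2 - 1) + 1 = r ^ 2 by omega, h3, one_mul]
      exact mul_right_cancel h5
    have h6 : x ∈ N := by
      apply (QuotientGroup.eq_one_iff _).mp
      rw [hxdef, QuotientGroup.mk_pow]
      exact h4
    exact (Subgroup.closure_le N).mpr (Set.singleton_subset_iff.mpr h6)
  refine ⟨⟨hmem, hlb⟩, ?_⟩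
  rw [hxcl, Nat.card_zpowers, hxdef, orderOf_pow, horda]
end

section
/- For odd n ≥ 5, the permutations x = (1 2 … n) and y = (1 2 4) generate the alternating group A_n. -/
/-! Let `H = ⟨x, y⟩`. It is transitive since it contains the `n`-cycle `x`. A block `B` of `H`
with at least two points that meets the support of a 3-cycle `c ∈ H` at `a` contains `c a`:
otherwise `B` and `c • B` would be disjoint subsets of the three-point support of `c`, with two
points each. As `y 0 = 1 = x 0`, translating by powers of `x` shows that a block through `0`
with two points contains every `x ^ k 0`, i.e. everything, so `H` is primitive. By Jordan's
theorem a primitive group containing a 3-cycle contains `A_n`, and `x`, `y` are even. -/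

open MulAction
open scoped Pointwise

namespace Equiv.Perm

variable {α : Type*} [Fintype α] [DecidableEq α] {H : Subgroup (Perm α)}

theorem IsThreeCycle.apply_mem_of_isBlock {c : Perm α} (hc : c.IsThreeCycle) (hcH : c ∈ H)
    {B : Set α} (hB : IsBlock H B) (hBnt : B.Nontrivial) {a : α} (ha : a ∈ B)
    (hca : c a ≠ a) : c a ∈ B := by
  obtain hfix | hdisj := hB.smul_eq_or_disjoint ⟨c, hcH⟩
  · exact hfix ▸ Set.smul_mem_smul_set (a := (⟨c, hcH⟩ : H)) ha
  obtain ⟨b, hb, hba⟩ := hBnt.exists_ne a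
  have hout : ∀ z ∈ B, c z ∉ B := fun z hz hcz =>
    Set.disjoint_left.mp hdisj (Set.smul_mem_smul_set (a := (⟨c, hcH⟩ : H)) hz) hcz
  have hcb : c b ≠ b := fun h => hout b hb (by rwa [h])
  have hcab : c a ≠ c b := c.injective.ne hba.symm
  have hacb : a ≠ c b := fun h => hout b hb (h ▸ ha)
  have hbca : b ≠ c a := fun h => hout a ha (h ▸ hb)
  have hsub : ({a, b, c a, c b} : Finset α) ⊆ c.support := by
    simp [Finset.insert_subset_iff, hca, hcb]
  have hcard := Finset.card_le_card hsub
  rw [hc.card_support, Finset.card_insert_of_notMem (by simp [hba.symm, hca.symm, hacb]),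
    Finset.card_insert_of_notMem (by simp [hbca, hcb.symm]), Finset.card_pair hcab] at hcard
  omega

theorem IsCycle.exists_pow_apply_eq_of_support_eq_univ {σ : Perm α} (hσ : σ.IsCycle)
    (hsupp : σ.support = Finset.univ) (a b : α) : ∃ k : ℕ, (σ ^ k) a = b :=
  hσ.exists_pow_eq (by simp [← mem_support, hsupp]) (by simp [← mem_support, hsupp])

theorem isPreprimitive_of_cycle_mem_of_isThreeCycle_mem {σ c : Perm α} (hσ : σ.IsCycle)
    (hsupp : σ.support = Finset.univ) (hσH : σ ∈ H) (hc : c.IsThreeCycle) (hcH : c ∈ H)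
    {a : α} (hca : c a = σ a) : IsPreprimitive H α := by
  have hreach := hσ.exists_pow_apply_eq_of_support_eq_univ hsupp a
  have : IsPretransitive H α := (isPretransitive_iff_base a).mpr fun b => by
    obtain ⟨k, hk⟩ := hreach b
    exact ⟨⟨σ ^ k, H.pow_mem hσH k⟩, hk⟩
  refine .of_isTrivialBlock_base a fun {B} haB hB => ?_
  rw [IsTrivialBlock, or_iff_not_imp_left, Set.not_subsingleton_iff]
  intro hBnt
  have hca_ne : c a ≠ a := hca ▸ mem_support.mp (hsupp ▸ Finset.mem_univ a)
  have hpow : ∀ k : ℕ, (σ ^ k) a ∈ B := by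
    intro k
    induction k with
    | zero => exact haB
    | succ k ih =>
      let g : H := ⟨σ ^ k, H.pow_mem hσH k⟩
      have ha' : a ∈ g⁻¹ • B := Set.mem_inv_smul_set_iff.mpr ih
      have hca' := hc.apply_mem_of_isBlock hcH (hB.translate g⁻¹)
        (hBnt.image (MulAction.injective g⁻¹)) ha' hca_ne
      rw [hca, Set.mem_inv_smul_set_iff] at hca'
      rwa [pow_succ, Perm.mul_apply]
  exact Set.eq_univ_of_forall fun b => (hreach b).elim fun k hk => hk ▸ hpow k

theorem closure_cycle_threeCycle_eq_alternatingGroup {σ c : Perm α} (hσ : σ.IsCycle)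
    (hsupp : σ.support = Finset.univ) (hσA : σ ∈ alternatingGroup α) (hc : c.IsThreeCycle)
    {a : α} (hca : c a = σ a) : Subgroup.closure {σ, c} = alternatingGroup α := by
  refine le_antisymm ?_ ?_
  · rw [Subgroup.closure_le, Set.insert_subset_iff, Set.singleton_subset_iff]
    exact ⟨hσA, hc.mem_alternatingGroup⟩
  · have hσH : σ ∈ Subgroup.closure {σ, c} := Subgroup.subset_closure (by simp)
    have hcH : c ∈ Subgroup.closure {σ, c} := Subgroup.subset_closure (by simp)
    exact alternatingGroup_le_of_isPreprimitive_of_isThreeCycle_mem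
      (isPreprimitive_of_cycle_mem_of_isThreeCycle_mem hσ hsupp hσH hc hcH hca) hc hcH

end Equiv.Perm

open Equiv.Perm

theorem List.formPerm_finRange (n : ℕ) : (List.finRange n).formPerm = finRotate n := by
  ext i
  have := i.neZero
  have h := List.formPerm_apply_getElem _ (List.nodup_finRange n) i (by simp)
  simp only [List.getElem_finRange, Fin.cast_mk, List.length_finRange] at h
  rw [h, finRotate_apply, Fin.val_add, Fin.val_one', Nat.add_mod_mod]

theorem List.isThreeCycle_formPerm_triple {α : Type*} [Fintype α] [DecidableEq α] {a b c : α}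
    (hab : a ≠ b) (hac : a ≠ c) (hbc : b ≠ c) : [a, b, c].formPerm.IsThreeCycle := by
  rw [List.formPerm_cons_cons, List.formPerm_pair, Equiv.swap_comm a b]
  exact isThreeCycle_swap_mul_swap_same hab.symm hbc hac

/-- For odd `n ≥ 5`, the `n`-cycle `x = (1 2 … n)` and the 3-cycle `y = (1 2 4)`
generate the alternating group `A_n`.  (Points are labelled `0,…,n−1`.) -/
theorem stmt_9 (n : ℕ) (hn : 5 ≤ n) (hodd : Odd n) :
    Subgroup.closure
        ({(List.finRange n).formPerm,
          ([(⟨0, by omega⟩ : Fin n), ⟨1, by omega⟩, ⟨3, by omega⟩]).formPerm} :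
          Set (Equiv.Perm (Fin n))) =
      alternatingGroup (Fin n) := by
  obtain ⟨k, rfl⟩ := hodd
  have h01 : (⟨0, by omega⟩ : Fin (2 * k + 1)) ≠ ⟨1, by omega⟩ := by simp
  have h03 : (⟨0, by omega⟩ : Fin (2 * k + 1)) ≠ ⟨3, by omega⟩ := by simp
  have h13 : (⟨1, by omega⟩ : Fin (2 * k + 1)) ≠ ⟨3, by omega⟩ := by simp
  rw [List.formPerm_finRange]
  refine closure_cycle_threeCycle_eq_alternatingGroup (isCycle_finRotate_of_le (by omega))
    (support_finRotate_of_le (by omega)) finRotate_bit1_mem_alternatingGroup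
    (List.isThreeCycle_formPerm_triple h01 h03 h13) (a := ⟨0, by omega⟩) ?_
  rw [List.formPerm_apply_head _ _ _ (by simp)]
  ext
  simp [finRotate_apply, Nat.mod_eq_of_lt (by omega : 1 < 2 * k + 1)]
end

section
/- For even n ≥ 8, the permutations x = (1 2 … n−1) and y = (1 n)(2 3) generate the alternating group A_n. -/
/-!
Label the points `0, …, n - 1` and let `p = n - 1`. Both generators are even: `x` is a cycle of
odd length `n - 1` and `y = (0 p)(1 2)` a double transposition. The group `G = ⟨x, y⟩` is
2-transitive, since `x` fixes `p` and permutes the other points transitively while `y` moves `p`;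
in particular `G` is primitive. Conjugating `y` by `x³` gives `(3 p)(4 5)`, and the square of the
product of these two double transpositions is the 3-cycle `(0 3 p)`. Jordan's theorem for
primitive groups containing a 3-cycle then gives `A_n ≤ G`.
-/

open Equiv Equiv.Perm

namespace Equiv.Perm

theorem viaEmbeddingHom_swap {α β : Type*} [DecidableEq α] [DecidableEq β] (ι : α ↪ β)
    (a b : α) :
    viaEmbeddingHom ι (swap a b) = swap (ι a) (ι b) := by
  ext c
  rw [viaEmbeddingHom_apply]
  by_cases hc : c ∈ Set.range ι
  · obtain ⟨d, rfl⟩ := hc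
    rw [viaEmbedding_apply, ι.injective.swap_apply]
  · rw [viaEmbedding_apply_of_notMem _ _ _ hc,
      swap_apply_of_ne_of_ne (fun h => hc ⟨a, h.symm⟩) (fun h => hc ⟨b, h.symm⟩)]

theorem isMultiplyPretransitive_two_of_isPretransitive_stabilizer {α : Type*}
    {G : Subgroup (Perm α)} (p : α) (htrans : ∀ a, ∃ g ∈ G, g p = a)
    (hstab : ∀ b c, b ≠ p → c ≠ p → ∃ g ∈ G, g p = p ∧ g b = c) :
    MulAction.IsMultiplyPretransitive G α 2 := by
  rw [MulAction.is_two_pretransitive_iff]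
  intro a b c d hab hcd
  obtain ⟨g, hg, rfl⟩ := htrans a
  obtain ⟨g', hg', rfl⟩ := htrans c
  have hb : g⁻¹ b ≠ p := fun h => hab (by rw [← h, coe_inv, apply_symm_apply])
  have hd : g'⁻¹ d ≠ p := fun h => hcd (by rw [← h, coe_inv, apply_symm_apply])
  obtain ⟨h, hh, hhp, hhb⟩ := hstab _ _ hb hd
  refine ⟨⟨g' * h * g⁻¹, G.mul_mem (G.mul_mem hg' hh) (G.inv_mem hg)⟩, ?_, ?_⟩
  · change (g' * h * g⁻¹) (g p) = g' p
    rw [mul_apply, mul_apply, coe_inv, symm_apply_apply, hhp]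
  · change (g' * h * g⁻¹) b = d
    rw [mul_apply, mul_apply, hhb, coe_inv, apply_symm_apply]

end Equiv.Perm

theorem List.nodup_take_finRange (n m : ℕ) : ((List.finRange n).take m).Nodup :=
  (List.take_sublist _ _).nodup (List.nodup_finRange n)

def longCycle (n : ℕ) : Perm (Fin n) := ((List.finRange n).take (n - 1)).formPerm

section LongCycle

variable {n : ℕ}

theorem longCycle_pow_apply (k : ℕ) {i : ℕ} (hi : i < n - 1) :
    (longCycle n ^ k) ⟨i, by omega⟩ =
      ⟨(i + k) % (n - 1), (Nat.mod_lt _ (by omega)).trans (by omega)⟩ := by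
  have key := List.formPerm_pow_apply_getElem _ (List.nodup_take_finRange n (n - 1)) k i
    (by simpa using hi)
  simp only [List.getElem_take, List.getElem_finRange, List.length_take, List.length_finRange,
    Nat.min_eq_left (Nat.sub_le n 1)] at key
  exact key

theorem longCycle_pow_apply_last (k : ℕ) (h : n - 1 < n) :
    (longCycle n ^ k) ⟨n - 1, h⟩ = ⟨n - 1, h⟩ := by
  refine pow_apply_eq_self_of_apply_eq_self (List.formPerm_apply_of_notMem ?_) k
  simp [List.mem_take_iff_getElem]

theorem sign_longCycle (hn : 3 ≤ n) (heven : Even n) : sign (longCycle n) = 1 := by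
  have hnodup := List.nodup_take_finRange n (n - 1)
  have hlen : ((List.finRange n).take (n - 1)).length = n - 1 := by simp
  rw [longCycle, (List.isCycle_formPerm hnodup (by omega)).sign,
    List.support_formPerm_of_nodup _ hnodup, List.card_toFinset, List.dedup_eq_self.mpr hnodup,
    hlen, Odd.neg_one_pow (Nat.Even.sub_odd (by omega) heven odd_one)]
  · simp
  · intro x hx
    have := hlen.symm.trans (congrArg List.length hx)
    simp only [List.length_singleton] at this
    omega

theorem exists_longCycle_pow_apply_eq {a b : Fin n} (ha : (a : ℕ) < n - 1)
    (hb : (b : ℕ) < n - 1) :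
    ∃ k, (longCycle n ^ k) a = b := by
  refine ⟨b + (n - 1) - a, ?_⟩
  rw [← Fin.eta a (by omega), longCycle_pow_apply _ ha]
  ext
  simp [show (a : ℕ) + (b + (n - 1) - a) = b + (n - 1) by omega, Nat.mod_eq_of_lt hb]

end LongCycle

theorem isPreprimitive_closure_longCycle {n : ℕ} (h : n - 1 < n) (y : Perm (Fin n))
    (hy : y ⟨n - 1, h⟩ ≠ ⟨n - 1, h⟩) :
    MulAction.IsPreprimitive (Subgroup.closure {longCycle n, y}) (Fin n) := by
  set G := Subgroup.closure {longCycle n, y}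
  have hx : longCycle n ∈ G := Subgroup.subset_closure (by simp)
  have hyG : y ∈ G := Subgroup.subset_closure (by simp)
  have hlt : ∀ a : Fin n, a ≠ ⟨n - 1, h⟩ → (a : ℕ) < n - 1 := fun a ha => by
    have := a.isLt; have : (a : ℕ) ≠ n - 1 := fun e => ha (Fin.ext e); omega
  apply MulAction.isPreprimitive_of_is_two_pretransitive
  refine isMultiplyPretransitive_two_of_isPretransitive_stabilizer ⟨n - 1, h⟩ (fun a => ?_)
    (fun b c hb hc => ?_)
  · by_cases ha : a = ⟨n - 1, h⟩
    · exact ⟨1, G.one_mem, ha ▸ rfl⟩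
    obtain ⟨k, hk⟩ := exists_longCycle_pow_apply_eq (hlt _ hy) (hlt a ha)
    exact ⟨longCycle n ^ k * y, G.mul_mem (G.pow_mem hx k) hyG, hk⟩
  · obtain ⟨k, hk⟩ := exists_longCycle_pow_apply_eq (hlt b hb) (hlt c hc)
    exact ⟨longCycle n ^ k, G.pow_mem hx k, longCycle_pow_apply_last k h, hk⟩

/-- The points `0, …, 5, n - 1` carry `y` and its conjugate by `x³`, so identities between these
permutations can be checked by `decide` in `Perm (Fin 7)` and transported along
`viaEmbeddingHom`. -/
def sevenPoints (n : ℕ) (hn : 7 ≤ n) : Fin 7 ↪ Fin n where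
  toFun i := ⟨if (i : ℕ) = 6 then n - 1 else i, by split <;> omega⟩
  inj' i j hij := by
    simp only [Fin.mk.injEq] at hij
    ext
    split_ifs at hij <;> omega

section SevenPoints

variable {n : ℕ} (hn : 7 ≤ n)

local notation "ι" => sevenPoints n hn
local notation "φ" => viaEmbeddingHom (sevenPoints n hn)

theorem sevenPoints_apply_of_lt {i : Fin 7} (hi : (i : ℕ) < 6) : ι i = ⟨i, by omega⟩ :=
  Fin.ext (if_neg hi.ne)

theorem sevenPoints_six : ι 6 = ⟨n - 1, by omega⟩ := rfl

theorem longCycle_pow_three_conj :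
    longCycle n ^ 3 * φ (swap 0 6 * swap 1 2) * (longCycle n ^ 3)⁻¹ =
      φ (swap 3 6 * swap 4 5) := by
  have hx : ∀ i j : Fin 7, (i : ℕ) + 3 = j → (j : ℕ) < 6 →
      (longCycle n ^ 3) (ι i) = ι j := by
    intro i j hij hj
    rw [sevenPoints_apply_of_lt hn (by omega), sevenPoints_apply_of_lt hn hj,
      longCycle_pow_apply 3 (by omega)]
    simp only [hij, Nat.mod_eq_of_lt (show (j : ℕ) < n - 1 by omega)]
  have h6 : (longCycle n ^ 3) (ι 6) = ι 6 := longCycle_pow_apply_last 3 _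
  rw [map_mul, map_mul, ← conj_mul, viaEmbeddingHom_swap, viaEmbeddingHom_swap,
    ← swap_apply_apply, ← swap_apply_apply, hx 0 3 rfl (by decide), hx 1 4 rfl (by decide),
    hx 2 5 rfl (by decide), h6, viaEmbeddingHom_swap, viaEmbeddingHom_swap]

theorem isThreeCycle_sq_mul_conj :
    IsThreeCycle ((φ (swap 0 6 * swap 1 2) * φ (swap 3 6 * swap 4 5)) ^ 2) := by
  have h₇ : (swap (0 : Fin 7) 6 * swap 1 2 * (swap 3 6 * swap 4 5)) ^ 2 =
      swap 0 6 * swap 0 3 := by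
    decide
  rw [← map_mul, ← map_pow, h₇, map_mul, viaEmbeddingHom_swap, viaEmbeddingHom_swap]
  exact isThreeCycle_swap_mul_swap_same ((ι).injective.ne (by decide))
    ((ι).injective.ne (by decide)) ((ι).injective.ne (by decide))

end SevenPoints

/-- For even `n ≥ 8`, the `(n−1)`-cycle `x = (1 2 … n−1)` (fixing `n`) and the double
transposition `y = (1 n)(2 3)` generate the alternating group `A_n`.
(Points are labelled `0,…,n−1`, so `x` cycles `0,…,n−2` and `y = (0, n−1)(1, 2)`.) -/
theorem stmt_10 (n : ℕ) (hn : 8 ≤ n) (heven : Even n) :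
    Subgroup.closure
        ({((List.finRange n).take (n - 1)).formPerm,
          Equiv.swap (⟨0, by omega⟩ : Fin n) ⟨n - 1, by omega⟩ *
            Equiv.swap (⟨1, by omega⟩ : Fin n) ⟨2, by omega⟩} :
          Set (Equiv.Perm (Fin n))) =
      alternatingGroup (Fin n) := by
  have h7 : 7 ≤ n := by omega
  set y₇ : Perm (Fin 7) := swap 0 6 * swap 1 2
  have hy : swap (⟨0, by omega⟩ : Fin n) ⟨n - 1, by omega⟩ *
      swap ⟨1, by omega⟩ ⟨2, by omega⟩ = viaEmbeddingHom (sevenPoints n h7) y₇ := by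
    rw [map_mul, viaEmbeddingHom_swap, viaEmbeddingHom_swap]
    rfl
  rw [hy, show ((List.finRange n).take (n - 1)).formPerm = longCycle n from rfl]
  set G := Subgroup.closure {longCycle n, viaEmbeddingHom (sevenPoints n h7) y₇}
  have hxG : longCycle n ∈ G := Subgroup.subset_closure (by simp)
  have hyG : viaEmbeddingHom (sevenPoints n h7) y₇ ∈ G := Subgroup.subset_closure (by simp)
  refine le_antisymm ((Subgroup.closure_le _).mpr ?_) ?_
  · rintro g (rfl | rfl)
    · exact sign_longCycle (by omega) heven
    · rw [SetLike.mem_coe, mem_alternatingGroup, map_mul, map_mul, viaEmbeddingHom_swap,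
        viaEmbeddingHom_swap, sign_swap ((sevenPoints n h7).injective.ne (by decide)),
        sign_swap ((sevenPoints n h7).injective.ne (by decide))]
      rfl
  · have hprim : MulAction.IsPreprimitive G (Fin n) := by
      refine isPreprimitive_closure_longCycle (by omega) _ ?_
      rw [← sevenPoints_six h7, viaEmbeddingHom_apply, viaEmbedding_apply]
      exact (sevenPoints n h7).injective.ne (by decide)
    refine alternatingGroup_le_of_isPreprimitive_of_isThreeCycle_mem hprim
      (isThreeCycle_sq_mul_conj h7) (G.pow_mem (G.mul_mem hyG ?_) 2)
    rw [← longCycle_pow_three_conj h7]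
    exact G.mul_mem (G.mul_mem (G.pow_mem hxG 3) hyG) (G.inv_mem (G.pow_mem hxG 3))
end

section
/- Let Δ be a group with index-2 subgroup Δ⁺ and let H, K be normal subgroups of Δ⁺ with K ≤ H, such that K·K^r = Δ⁺ (K is 'totally chiral'), where K^r = r⁻¹Kr for r ∈ Δ \ Δ⁺. Let L = K ∩ H^r. Then L^r / (L ∩ L^r) ≅ H/K. -/
/-! Conjugating `L = K ∩ H^r` by `r` gives `L^r = K^r ∩ H`, because `r²` lies in `Δ⁺` and
so normalizes `H`. Since `K·K^r = Δ⁺ ⊇ H` and `K ≤ H`, Dedekind's modular law gives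
`K·L^r = K·(K^r ∩ H) = H`, while `L ∩ L^r = K ∩ L^r` because `L^r ≤ K^r ≤ H^r`. The
second isomorphism theorem then identifies `L^r/(K ∩ L^r)` with `K·L^r/K = H/K`. -/

namespace Subgroup

variable {G : Type*} [Group G]

theorem le_normalizer_of_conj_mem {X P : Subgroup G}
    (h : ∀ g ∈ P, ∀ x ∈ X, g * x * g⁻¹ ∈ X) : P ≤ normalizer (X : Set _) :=
  fun g hg x => ⟨h g hg x, fun hx => by simpa [mul_assoc] using h g⁻¹ (inv_mem hg) _ hx⟩

theorem map_conj_map_conj_eq_self {X : Subgroup G} {g : G}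
    (hg : g * g ∈ normalizer (X : Set _)) :
    (X.map (MulAut.conj g).toMonoidHom).map (MulAut.conj g).toMonoidHom = X := by
  conv_rhs => rw [← mem_normalizer_iff_map_conj_eq.1 hg]
  rw [map_map]
  congr 1
  ext
  simp [mul_assoc]

theorem sup_inf_eq_of_le_normalizer {A B C : Subgroup G} (hAC : A ≤ C)
    (hB : B ≤ normalizer (A : Set _)) : A ⊔ B ⊓ C = (A ⊔ B) ⊓ C := by
  apply SetLike.coe_injective
  rw [coe_mul_of_right_le_normalizer_left A _ (inf_le_left.trans hB), mul_inf_assoc A B C hAC,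
    coe_inf, coe_mul_of_right_le_normalizer_left A B hB]

theorem nonempty_quotient_mulEquiv_of_sup_eq {M K H : Subgroup G} {N : Subgroup M} [N.Normal]
    [(K.subgroupOf H).Normal] (hM : M ≤ normalizer (K : Set _)) (hN : N = K.subgroupOf M)
    (hH : M ⊔ K = H) : Nonempty (M ⧸ N ≃* H ⧸ K.subgroupOf H) := by
  subst hN hH
  exact ⟨QuotientGroup.quotientInfEquivProdNormalizerQuotient M K hM⟩

end Subgroup

open Subgroup

theorem stmt_13_general {Δ : Type*} [Group Δ] (P : Subgroup Δ) (hP : P.index = 2)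
    (r : Δ)
    (H K : Subgroup Δ) (hHP : H ≤ P) (hKH : K ≤ H)
    (hHnorm : ∀ g ∈ P, ∀ h ∈ H, g * h * g⁻¹ ∈ H)
    (hKnorm : ∀ g ∈ P, ∀ k ∈ K, g * k * g⁻¹ ∈ K)
    (Hr Kr : Subgroup Δ)
    (hHr : Hr = H.map (MulAut.conj r⁻¹).toMonoidHom)
    (hKr : Kr = K.map (MulAut.conj r⁻¹).toMonoidHom)
    (htc : K ⊔ Kr = P)
    (L Lr : Subgroup Δ)
    (hL : L = K ⊓ Hr)
    (hLr : Lr = L.map (MulAut.conj r⁻¹).toMonoidHom)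
    [h₁ : ((L ⊓ Lr).subgroupOf Lr).Normal]
    [h₂ : (K.subgroupOf H).Normal] :
    Nonempty ((↥Lr ⧸ (L ⊓ Lr).subgroupOf Lr) ≃* (↥H ⧸ K.subgroupOf H)) := by
  have hKrP : Kr ≤ P := htc ▸ le_sup_right
  have hPK : P ≤ normalizer (K : Set _) := le_normalizer_of_conj_mem hKnorm
  have hLr_eq : Lr = Kr ⊓ H := by
    have hr2 : r⁻¹ * r⁻¹ ∈ normalizer (H : Set _) :=
      le_normalizer_of_conj_mem hHnorm (mul_self_mem_of_index_two hP r⁻¹)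
    rw [hLr, hL, map_inf _ _ _ (MulAut.conj r⁻¹).injective, hHr,
      map_conj_map_conj_eq_self hr2, hKr]
  have hLrHr : Lr ≤ Hr := hLr_eq ▸ inf_le_left.trans (hKr ▸ hHr ▸ map_mono hKH)
  refine nonempty_quotient_mulEquiv_of_sup_eq (hLr_eq ▸ inf_le_left.trans (hKrP.trans hPK)) ?_ ?_
  · rw [subgroupOf_inj, hL, inf_assoc, inf_assoc, inf_idem, inf_eq_right.2 hLrHr]
  · rw [sup_comm, hLr_eq, sup_inf_eq_of_le_normalizer hKH (hKrP.trans hPK), htc,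
      inf_eq_right.2 hHP]

/-- Let `P = Δ⁺` be an index-2 subgroup of `Δ`, `r ∈ Δ \ P`, and `H`, `K` normal
subgroups of `P` with `K ≤ H` and `K·K^r = P` (`K` totally chiral).  With
`L = K ⊓ H^r` and `L_Δ = L ⊓ L^r`, one has `L^r/L_Δ ≅ H/K`. -/
theorem stmt_13 {Δ : Type*} [Group Δ] (P : Subgroup Δ) (hP : P.index = 2)
    (r : Δ) (hr : r ∉ P)
    (H K : Subgroup Δ) (hHP : H ≤ P) (hKP : K ≤ P) (hKH : K ≤ H)
    (hHnorm : ∀ g ∈ P, ∀ h ∈ H, g * h * g⁻¹ ∈ H)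
    (hKnorm : ∀ g ∈ P, ∀ k ∈ K, g * k * g⁻¹ ∈ K)
    (Hr Kr : Subgroup Δ)
    (hHr : Hr = H.map (MulAut.conj r⁻¹).toMonoidHom)
    (hKr : Kr = K.map (MulAut.conj r⁻¹).toMonoidHom)
    (htc : K ⊔ Kr = P)
    (L Lr : Subgroup Δ)
    (hL : L = K ⊓ Hr)
    (hLr : Lr = L.map (MulAut.conj r⁻¹).toMonoidHom)
    [h₁ : ((L ⊓ Lr).subgroupOf Lr).Normal]
    [h₂ : (K.subgroupOf H).Normal] :
    Nonempty ((↥Lr ⧸ (L ⊓ Lr).subgroupOf Lr) ≃* (↥H ⧸ K.subgroupOf H)) :=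
  stmt_13_general P hP r H K hHP hKH hHnorm hKnorm Hr Kr hHr hKr htc L Lr hL hLr (h₁ := h₁)
    (h₂ := h₂)
end

section
/- In the affine group AGL_1(2^e) over F_q, q = 2^e with e > 1, let u generate F_q* and v ∈ F_q \ F_2, and let y : t ↦ u(t − v) + v. Then y generates the stabiliser of v in AGL_1(q), and together with its Frobenius conjugate y' : t ↦ u²t + (1−u)²v², the pair generates all of AGL_1(q): ⟨y, y'⟩ = AGL_1(q). -/
/-- In `AGL_1(2^e)` (`e > 1`), with `u` a generator of `F_q*` and `v ∈ F_q \ F_2`, the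
map `y : t ↦ u(t − v) + v` generates the stabiliser of `v`, and together with its
Frobenius conjugate `y' : t ↦ u²t + (1−u)²v²` it generates all of `AGL_1(q)`. -/
theorem stmt_17 {F : Type*} [Field F] [Fintype F] (e : ℕ) (he : 1 < e)
    (hcard : Fintype.card F = 2 ^ e)
    (u : Fˣ) (hu : ∀ w : Fˣ, w ∈ Subgroup.zpowers u)
    (v : F) (hv0 : v ≠ 0) (hv1 : v ≠ 1)
    (y' : F ≃ᵃ[F] F) (hy' : ∀ t : F, y' t = (u : F) ^ 2 * t + (1 - (u : F)) ^ 2 * v ^ 2) :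
    (∀ g : F ≃ᵃ[F] F,
        g v = v ↔ g ∈ Subgroup.zpowers (AffineEquiv.homothetyUnitsMulHom v u)) ∧
    Subgroup.closure
        ({AffineEquiv.homothetyUnitsMulHom v u, y'} : Set (F ≃ᵃ[F] F)) = ⊤ := by
  set Y := AffineEquiv.homothetyUnitsMulHom v u with hY
  set τ : F → (F ≃ᵃ[F] F) := fun c => AffineEquiv.constVAdd F F c with hτdef
  -- apply formula for Y ^ k
  have hYk : ∀ (k : ℤ) (t : F), (Y ^ k) t = (u : F) ^ k * (t - v) + v := by
    intro k t
    rw [show Y ^ k = AffineEquiv.homothetyUnitsMulHom v (u ^ k) from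
      (map_zpow (AffineEquiv.homothetyUnitsMulHom v) u k).symm]
    have h := congrFun (AffineEquiv.coe_homothetyUnitsMulHom_apply v (u ^ k)) t
    simp only [h, AffineMap.homothety_apply, smul_eq_mul, vsub_eq_sub, vadd_eq_add,
      Units.val_zpow_eq_zpow_val]
  have hτ0 : τ (0 : F) = 1 := by ext t; simp [hτdef]
  have hτap : ∀ c t : F, τ c t = c + t := fun c t => rfl
  -- decomposition of a general affine equiv
  have hdec : ∀ (g : F ≃ᵃ[F] F) (t : F), g t = g.linear 1 * (t - v) + g v := by
    intro g t
    have h := g.map_vadd v (t - v)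
    simp only [vadd_eq_add, sub_add_cancel] at h
    rw [h, show g.linear (t - v) = (t - v) * g.linear 1 by
      rw [← smul_eq_mul, ← map_smul, smul_eq_mul, mul_one]]
    ring
  have hlin : ∀ g : F ≃ᵃ[F] F, (g.linear 1 : F) ≠ 0 := by
    intro g h
    exact one_ne_zero (g.linear.injective (by simp [h]))
  have hdecomp : ∀ g : F ≃ᵃ[F] F, ∃ k : ℤ, g = τ (g v - v) * Y ^ k := by
    intro g
    obtain ⟨k, hk⟩ := Subgroup.mem_zpowers_iff.mp (hu (Units.mk0 (g.linear 1) (hlin g)))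
    refine ⟨k, AffineEquiv.ext fun t => ?_⟩
    have h2 : ((u ^ k : Fˣ) : F) = g.linear 1 := by rw [hk]; rfl
    rw [show (τ (g v - v) * Y ^ k) t = τ (g v - v) ((Y ^ k) t) from rfl, hYk, hτap,
      hdec g t, ← h2, Units.val_zpow_eq_zpow_val]
    ring
  -- Part 1
  have part1 : ∀ g : F ≃ᵃ[F] F, g v = v ↔ g ∈ Subgroup.zpowers Y := by
    intro g
    constructor
    · intro hgv
      obtain ⟨k, hk⟩ := hdecomp g
      rw [hgv, sub_self, hτ0, one_mul] at hk
      exact Subgroup.mem_zpowers_iff.mpr ⟨k, hk.symm⟩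
    · rintro hg
      obtain ⟨k, hk⟩ := Subgroup.mem_zpowers_iff.mp hg
      rw [← hk, hYk]; ring
  refine ⟨part1, ?_⟩
  -- characteristic 2
  haveI : CharP F (ringChar F) := ringChar.charP F
  obtain ⟨n, hn, hcard'⟩ := FiniteField.card F (ringChar F)
  have hchar : ringChar F = 2 := by
    have hdvd : ringChar F ∣ 2 ^ e := by
      rw [← hcard, hcard']
      exact dvd_pow_self _ (by exact_mod_cast n.pos.ne')
    have := hn.dvd_of_dvd_pow hdvd
    exact (Nat.prime_dvd_prime_iff_eq hn Nat.prime_two).mp this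
  haveI hp : CharP F 2 := hchar ▸ ringChar.charP F
  have h2 : (2 : F) = 0 := CharP.cast_eq_zero F 2
  -- u ≠ 1
  have hu1 : (u : F) ≠ 1 := by
    intro h
    obtain ⟨k, hk⟩ := Subgroup.mem_zpowers_iff.mp (hu (Units.mk0 v hv0))
    have : ((u ^ k : Fˣ) : F) = v := by rw [hk]; rfl
    rw [Units.val_zpow_eq_zpow_val, h, one_zpow] at this
    exact hv1 this.symm
  have hu0 : (u : F) ≠ 0 := u.ne_zero
  -- the closure
  set H := Subgroup.closure ({Y, y'} : Set (F ≃ᵃ[F] F)) with hH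
  have hYH : Y ∈ H := Subgroup.subset_closure (by simp)
  have hy'H : y' ∈ H := Subgroup.subset_closure (by simp)
  -- the translation element
  set c : F := ((u : F)⁻¹) ^ 2 * ((1 - (u : F) ^ 2) * v - (1 - (u : F)) ^ 2 * v ^ 2) with hc
  have hkey : (1 - (u : F) ^ 2) * v - (1 - (u : F)) ^ 2 * v ^ 2
      = (1 - (u : F)) ^ 2 * (v * (1 - v)) := by
    linear_combination (v * (u : F) * (1 - (u : F))) * h2
  have hc0 : c ≠ 0 := by
    rw [hc, hkey]
    exact mul_ne_zero (pow_ne_zero _ (inv_ne_zero hu0))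
      (mul_ne_zero (pow_ne_zero _ (sub_ne_zero.mpr (Ne.symm hu1)))
        (mul_ne_zero hv0 (sub_ne_zero.mpr (Ne.symm hv1))))
  have hτcH : τ c ∈ H := by
    have hmul : y' * τ c = Y ^ (2 : ℤ) := by
      refine AffineEquiv.ext fun t => ?_
      rw [show (y' * τ c) t = y' (τ c t) from rfl, hτap, hy', hYk, hc,
        show ((u : F) ^ (2:ℤ)) = (u : F) ^ 2 from by norm_cast]
      field_simp
      ring
    have : τ c = y'⁻¹ * Y ^ (2 : ℤ) := by rw [← hmul]; group
    rw [this]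
    exact mul_mem (inv_mem hy'H) (zpow_mem hYH 2)
  -- all translations
  have hτH : ∀ w : F, τ w ∈ H := by
    intro w
    rcases eq_or_ne w 0 with h | h
    · rw [h, hτ0]; exact one_mem H
    · obtain ⟨k, hk⟩ := Subgroup.mem_zpowers_iff.mp (hu (Units.mk0 (w / c) (div_ne_zero h hc0)))
      have hw : (u : F) ^ k * c = w := by
        have : ((u ^ k : Fˣ) : F) = w / c := by rw [hk]; rfl
        rw [Units.val_zpow_eq_zpow_val] at this
        rw [this, div_mul_cancel₀ _ hc0]
      have hconj : τ w * Y ^ k = Y ^ k * τ c := by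
        refine AffineEquiv.ext fun t => ?_
        rw [show (τ w * Y ^ k) t = τ w ((Y ^ k) t) from rfl,
          show (Y ^ k * τ c) t = (Y ^ k) (τ c t) from rfl, hτap, hYk, hYk, hτap, ← hw]
        ring
      have : τ w = Y ^ k * τ c * (Y ^ k)⁻¹ := by
        rw [eq_mul_inv_iff_mul_eq, hconj]
      rw [this]
      exact mul_mem (mul_mem (zpow_mem hYH k) hτcH) (inv_mem (zpow_mem hYH k))
  rw [Subgroup.eq_top_iff']
  intro g
  obtain ⟨k, hk⟩ := hdecomp g
  rw [hk]
  exact mul_mem (hτH _) (zpow_mem hYH k)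
end

section
/- In the group A = ⟨x, y | x^e = y^p = 1, x⁻¹yx = y²⟩ with p an odd prime and 2^e ≡ 1 (mod p), if there exists an automorphism of A sending x ↦ x⁻¹ and y ↦ y⁻¹, then p = 3. -/
/-- In `A = ⟨x, y | x^e = y^p = 1, x⁻¹yx = y²⟩ ≅ C_p ⋊ C_e` with `p` an odd prime and
`2^e ≡ 1 (mod p)`, if some automorphism of `A` sends `x ↦ x⁻¹` and `y ↦ y⁻¹`,
then `p = 3`. -/
theorem stmt_18 {A : Type*} [Group A] (x y : A) (e p : ℕ)
    (hp : p.Prime) (hodd : Odd p) (hep : 2 ^ e ≡ 1 [MOD p])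
    (hgen : Subgroup.closure ({x, y} : Set A) = ⊤)
    (hxe : x ^ e = 1) (hyp : y ^ p = 1)
    (hordx : orderOf x = e) (hordy : orderOf y = p)
    (hcard : Nat.card A = p * e)
    (hrel : x⁻¹ * y * x = y ^ 2)
    (haut : ∃ φ : A ≃* A, φ x = x⁻¹ ∧ φ y = y⁻¹) :
    p = 3 := by
  obtain ⟨φ, hx, hy⟩ := haut
  have h1 : φ (x⁻¹ * y * x) = φ (y ^ 2) := by rw [hrel]
  simp only [map_mul, map_inv, map_pow, hx, hy, inv_inv] at h1
  -- h1 : x * y⁻¹ * x⁻¹ = (y⁻¹) ^ 2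
  have h2 : x * y * x⁻¹ = y ^ 2 := by
    have := congrArg (·⁻¹) h1
    simpa [mul_assoc, pow_two] using this
  have h3 : y ^ 4 = y := by
    have : x * (x⁻¹ * y * x) * x⁻¹ = x * y ^ 2 * x⁻¹ := by rw [hrel]
    have hy' : y = (x * y * x⁻¹) ^ 2 := by
      calc y = x * (x⁻¹ * y * x) * x⁻¹ := by group
        _ = x * y ^ 2 * x⁻¹ := by rw [hrel]
        _ = (x * y * x⁻¹) ^ 2 := (conj_pow ..).symm
    rw [h2] at hy'
    rw [← pow_mul] at hy'
    exact hy'.symm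
  have h4 : y ^ 3 = 1 := by
    have : y ^ 4 * y⁻¹ = y * y⁻¹ := by rw [h3]
    calc y ^ 3 = y ^ 4 * y⁻¹ := by group
      _ = y * y⁻¹ := by rw [h3]
      _ = 1 := mul_inv_cancel y
  have hdvd : p ∣ 3 := by
    rw [← hordy]
    exact orderOf_dvd_of_pow_eq_one h4
  exact (Nat.prime_dvd_prime_iff_eq hp Nat.prime_three).mp hdvd
end
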